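/- arXiv:2212.01626 — 5 statements merged into one kernel-verified Lean document; each statement's English description precedes it below -/
import Mathlib

section
/- For every n and every i with 1 ≤ i ≤ ⌊(n+1)/2⌋, the operator exp(n!·D^{2i−1}) (a finite sum, since D^{n+1} = 0 on V_n) maps the lattice M_n bijectively onto itself; moreover these ⌊(n+1)/2⌋ operators are linearly independent, in the sense that exp(b_1·n!·D) ∘ exp(b_2·n!·D^3) ∘ ⋯ ∘ exp(b_k·n!·D^{2k−1}) = id (k = ⌊(n+1)/2⌋, b_i ∈ ℤ) forces b_1 = ⋯ = b_k = 0. -/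
open Polynomial

/-- `V n`: the real vector space of polynomials in `ℝ[t]` of degree at most `n`. -/
noncomputable def V (n : ℕ) : Submodule ℝ ℝ[X] := Polynomial.degreeLT ℝ (n + 1)

/-- Differentiation `D : V_n → V_n`. -/
noncomputable def Dop (n : ℕ) : Module.End ℝ (V n) :=
  (Polynomial.derivative (R := ℝ)).restrict (p := V n) (q := V n) fun p hp => by
    rw [V, Polynomial.mem_degreeLT] at hp ⊢
    exact lt_of_le_of_lt Polynomial.degree_derivative_le hp

/-- `γ_m(t) = (t+1)(t+2)⋯(t+m)/m!`. -/
noncomputable def gam (m : ℕ) : ℝ[X] :=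
  Polynomial.C ((m.factorial : ℝ))⁻¹ *
    ∏ i ∈ Finset.range m, (Polynomial.X + Polynomial.C (i + 1 : ℝ))

/-- `χ` is the Euler form: the (unique) bilinear form on `V n` with
`χ(γ_n(t+i), γ_n(t+j)) = C(n+j-i, n)` for `0 ≤ i, j ≤ n` (binomial coefficient,
equal to `0` when `n+j-i < n`). -/
def EulerCond (n : ℕ) (χ : ↥(V n) →ₗ[ℝ] ↥(V n) →ₗ[ℝ] ℝ) : Prop :=
  ∀ (i j : Fin (n + 1)) (f g : V n),
    (f : ℝ[X]) = (gam n).comp (Polynomial.X + Polynomial.C ((i : ℕ) : ℝ)) →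
    (g : ℝ[X]) = (gam n).comp (Polynomial.X + Polynomial.C ((j : ℕ) : ℝ)) →
    χ f g = ((n + (j : ℕ) - (i : ℕ)).choose n : ℝ)

/-- The exponential of an endomorphism of `V n`. Since the endomorphisms we apply it
to are sums of positive powers of `D`, which satisfies `D^(n+1) = 0` on `V n`, the
series truncated at degree `n` equals the full exponential. -/
noncomputable def expE (n : ℕ) (N : Module.End ℝ (V n)) : Module.End ℝ (V n) :=
  ∑ j ∈ Finset.range (n + 1), ((j.factorial : ℝ))⁻¹ • N ^ j

/-- The lattice `M n` of integer-valued polynomials, as a subset of `V n`. -/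
def MsetV (n : ℕ) : Set (V n) :=
  {f | ∀ m : ℤ, ∃ z : ℤ, (f : ℝ[X]).eval (m : ℝ) = (z : ℝ)}

section Aux
open Polynomial Finset

lemma coe_Dop (n : ℕ) (f : V n) : ((Dop n f : V n) : ℝ[X]) = derivative (f : ℝ[X]) :=
  LinearMap.restrict_coe_apply _ _ _

lemma coe_Dop_pow (n k : ℕ) (f : V n) :
    (((Dop n ^ k) f : V n) : ℝ[X]) = derivative^[k] (f : ℝ[X]) := by
  induction k generalizing f with
  | zero => rfl
  | succ k ih =>
    rw [pow_succ', Module.End.mul_apply, Function.iterate_succ_apply, coe_Dop, ih f,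
        ← Function.iterate_succ_apply, Function.iterate_succ_apply']

lemma natDegree_lt (n : ℕ) (f : V n) : (f : ℝ[X]).natDegree < n + 1 := by
  have hf : (f : ℝ[X]) ∈ degreeLT ℝ (n+1) := f.2
  rw [Polynomial.mem_degreeLT] at hf
  by_cases h : (f : ℝ[X]) = 0
  · simp [h]
  · rwa [← Polynomial.natDegree_lt_iff_degree_lt h] at hf

lemma Dop_pow_zero (n m : ℕ) (hm : n + 1 ≤ m) : (Dop n) ^ m = 0 := by
  refine LinearMap.ext fun f => Subtype.ext ?_
  rw [coe_Dop_pow]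
  simpa using iterate_derivative_eq_zero (lt_of_lt_of_le (natDegree_lt n f) hm)

open Polynomial Finset

lemma coe_expE (n k : ℕ) (c : ℝ) (f : V n) :
    (((expE n (c • Dop n ^ k)) f : V n) : ℝ[X]) =
      ∑ j ∈ Finset.range (n + 1),
        (((j.factorial : ℝ))⁻¹ * c ^ j) • derivative^[k * j] (f : ℝ[X]) := by
  rw [expE, LinearMap.sum_apply]
  rw [AddSubmonoidClass.coe_finset_sum]
  refine Finset.sum_congr rfl fun j hj => ?_
  rw [LinearMap.smul_apply, _root_.smul_pow, LinearMap.smul_apply, ← pow_mul]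
  rw [SetLike.val_smul, SetLike.val_smul, coe_Dop_pow, smul_smul]

lemma expE_zero (n : ℕ) : expE n 0 = 1 := by
  rw [expE]
  rw [Finset.sum_eq_single_of_mem 0 (Finset.mem_range.mpr (Nat.succ_pos n))]
  · norm_num
  · intro j _ hj0
    rw [zero_pow hj0, smul_zero]
section D
open Polynomial Finset

lemma expE_fix (n k m : ℕ) (c : ℝ) (f : V n) (hf : (f : ℝ[X]) = X ^ m) (hk : m < k) :
    expE n (c • Dop n ^ k) f = f := by
  refine Subtype.ext ?_
  rw [coe_expE, Finset.sum_eq_single_of_mem 0 (Finset.mem_range.mpr (Nat.succ_pos n))]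
  · norm_num
  · intro j _ hj0
    have : derivative^[k * j] (f : ℝ[X]) = 0 := by
      rw [hf]
      refine iterate_derivative_eq_zero ?_
      calc (X ^ m : ℝ[X]).natDegree ≤ m := natDegree_X_pow_le m
        _ < k * j := lt_of_lt_of_le hk (Nat.le_mul_of_pos_right k (Nat.pos_of_ne_zero hj0))
    rw [this, smul_zero]

lemma expE_hit (n k : ℕ) (hn : 1 ≤ n) (hk1 : 1 ≤ k) (c : ℝ) (f y : V n)
    (hf : (f : ℝ[X]) = X ^ k) (hy : (y : ℝ[X]) = 1) :
    expE n (c • Dop n ^ k) f = f + (c * k.factorial) • y := by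
  refine Subtype.ext ?_
  rw [coe_expE]
  have hsub : ({0, 1} : Finset ℕ) ⊆ Finset.range (n + 1) := by
    intro x hx
    simp only [Finset.mem_insert, Finset.mem_singleton] at hx
    rcases hx with rfl | rfl <;> simp [Finset.mem_range] <;> omega
  rw [← Finset.sum_subset hsub]
  · rw [Finset.sum_pair (by norm_num : (0:ℕ) ≠ 1)]
    simp only [pow_zero, pow_one, mul_zero, mul_one, Function.iterate_zero, id_eq,
      Nat.factorial_zero, Nat.factorial_one, Nat.cast_one, inv_one, one_mul, one_smul]
    rw [hf, iterate_derivative_X_pow_eq_smul, Nat.descFactorial_self, Nat.sub_self, pow_zero]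
    push_cast
    rw [hf, hy, smul_smul]
  · intro j hj hj2
    have hj2' : 2 ≤ j := by
      simp only [Finset.mem_insert, Finset.mem_singleton] at hj2
      omega
    have : derivative^[k * j] (f : ℝ[X]) = 0 := by
      rw [hf]
      refine iterate_derivative_eq_zero ?_
      calc (X ^ k : ℝ[X]).natDegree ≤ k := natDegree_X_pow_le k
        _ < k * j := by nlinarith
    rw [this, smul_zero]

lemma list_prod_fix {n : ℕ} (l : List (Module.End ℝ (V n))) (x : V n)
    (h : ∀ g ∈ l, g x = x) : l.prod x = x := by
  induction l with
  | nil => simp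
  | cons g t ih =>
    rw [List.prod_cons, Module.End.mul_apply, ih (fun g' hg' => h g' (List.mem_cons_of_mem _ hg')),
      h g List.mem_cons_self]

lemma key (n : ℕ) (hn : 1 ≤ n) : ∀ (k : ℕ) (c : Fin k → ℝ) (e : Fin k → ℕ) (i : Fin k)
    (x y : V n), (x : ℝ[X]) = X ^ (e i) → (y : ℝ[X]) = 1 → 1 ≤ e i →
    (∀ j, i < j → e i < e j) → (∀ j, j < i → c j = 0) →
    (List.ofFn fun j => expE n (c j • Dop n ^ e j)).prod x
      = x + (c i * ((e i).factorial : ℝ)) • y := by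
  intro k
  induction k with
  | zero => exact fun c e i => absurd i.2 (by omega)
  | succ k ih =>
    intro c e i x y hx hy he1 hgt hlt
    rw [List.ofFn_succ, List.prod_cons, Module.End.mul_apply]
    induction i using Fin.cases with
    | zero =>
      rw [list_prod_fix _ x]
      · exact expE_hit n (e 0) hn he1 (c 0) x y hx hy
      · intro g hg
        rw [List.mem_ofFn] at hg
        obtain ⟨j, rfl⟩ := hg
        exact expE_fix n (e j.succ) (e 0) (c j.succ) x hx (hgt j.succ (Fin.succ_pos j))
    | succ i' =>
      rw [ih (fun j => c j.succ) (fun j => e j.succ) i' x y hx hy he1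
        (fun j hj => hgt j.succ (by rwa [Fin.succ_lt_succ_iff]))
        (fun j hj => hlt j.succ (by rwa [Fin.succ_lt_succ_iff]))]
      rw [hlt 0 (Fin.succ_pos i'), zero_smul, expE_zero, Module.End.one_apply]

end D
section F
open Polynomial Finset

lemma AB_pow (n k : ℕ) (c d : ℝ) (j l : ℕ) :
    (c • Dop n ^ k) ^ j * (d • Dop n ^ k) ^ l = (c ^ j * d ^ l) • Dop n ^ (k * (j + l)) := by
  rw [_root_.smul_pow, _root_.smul_pow, smul_mul_smul_comm, ← pow_mul, ← pow_mul, ← pow_add,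
    Nat.mul_add]

lemma G_eq (n k : ℕ) (c d : ℝ) (j l : ℕ) :
    ((j.factorial : ℝ))⁻¹ • (c • Dop n ^ k) ^ j * (((l.factorial : ℝ))⁻¹ • (d • Dop n ^ k) ^ l)
      = (((j.factorial : ℝ))⁻¹ * ((l.factorial : ℝ))⁻¹ * (c ^ j * d ^ l))
          • Dop n ^ (k * (j + l)) := by
  rw [smul_mul_smul_comm, AB_pow, smul_smul]

lemma expE_mul (n k : ℕ) (hk : 1 ≤ k) (c d : ℝ) :
    expE n (c • Dop n ^ k) * expE n (d • Dop n ^ k) = expE n ((c + d) • Dop n ^ k) := by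
  have hG0 : ∀ j l : ℕ, n + 1 ≤ j + l →
      (((j.factorial : ℝ))⁻¹ * ((l.factorial : ℝ))⁻¹ * (c ^ j * d ^ l))
        • Dop n ^ (k * (j + l)) = 0 := by
    intro j l h
    rw [Dop_pow_zero n _ (le_trans h (Nat.le_mul_of_pos_left _ hk)), smul_zero]
  have hcomm : Commute (c • Dop n ^ k) (d • Dop n ^ k) := by
    apply Commute.smul_left; apply Commute.smul_right; exact Commute.refl _
  rw [expE, expE, expE, Finset.sum_mul_sum]
  have hL : ∀ j ∈ Finset.range (n+1), ∀ l ∈ Finset.range (n+1),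
      ((j.factorial : ℝ))⁻¹ • (c • Dop n ^ k) ^ j * (((l.factorial : ℝ))⁻¹ • (d • Dop n ^ k) ^ l)
      = (((j.factorial : ℝ))⁻¹ * ((l.factorial : ℝ))⁻¹ * (c ^ j * d ^ l))
          • Dop n ^ (k * (j + l)) := fun j _ l _ => G_eq n k c d j l
  rw [Finset.sum_congr rfl fun j hj => Finset.sum_congr rfl fun l hl => hL j hj l hl]
  have hR : ∀ m ∈ Finset.range (n+1),
      ((m.factorial : ℝ))⁻¹ • ((c + d) • Dop n ^ k) ^ m
      = ∑ t ∈ Finset.range (m+1),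
          (((t.factorial : ℝ))⁻¹ * (((m-t).factorial : ℝ))⁻¹ * (c ^ t * d ^ (m-t)))
            • Dop n ^ (k * (t + (m - t))) := by
    intro m hm
    rw [add_smul, hcomm.add_pow, Finset.smul_sum]
    refine Finset.sum_congr rfl fun t ht => ?_
    have htm : t ≤ m := by simp only [Finset.mem_range] at ht; omega
    rw [AB_pow n k c d t (m - t), ← nsmul_eq_mul', ← Nat.cast_smul_eq_nsmul ℝ,
      smul_smul, smul_smul]
    congr 1
    have hfac : (m.choose t * t.factorial * (m - t).factorial : ℕ) = m.factorial :=
      Nat.choose_mul_factorial_mul_factorial htm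
    have h1 : (t.factorial : ℝ) ≠ 0 := Nat.cast_ne_zero.mpr (Nat.factorial_ne_zero t)
    have h2 : ((m - t).factorial : ℝ) ≠ 0 := Nat.cast_ne_zero.mpr (Nat.factorial_ne_zero _)
    have h3 : (m.factorial : ℝ) ≠ 0 := Nat.cast_ne_zero.mpr (Nat.factorial_ne_zero m)
    have hcast : (m.choose t : ℝ) * t.factorial * (m-t).factorial = m.factorial := by
      exact_mod_cast congrArg (Nat.cast : ℕ → ℝ) hfac
    have key : (m.choose t : ℝ) * ((m.factorial : ℝ))⁻¹
        = ((t.factorial : ℝ))⁻¹ * (((m - t).factorial : ℝ))⁻¹ := by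
      field_simp
      linear_combination hcast
    linear_combination (c ^ t * d ^ (m - t)) * key
  rw [Finset.sum_congr rfl hR]
  rw [← Finset.sum_product', Finset.sum_sigma']
  rw [← Finset.sum_filter_of_ne (p := fun p : ℕ × ℕ => p.1 + p.2 ≤ n)
    (fun p _ hne => by by_contra h; exact hne (hG0 p.1 p.2 (by omega)))]
  refine Finset.sum_nbij' (fun p => ⟨p.1 + p.2, p.1⟩)
    (fun q => (q.2, q.1 - q.2)) ?_ ?_ ?_ ?_ ?_
  · intro p hp
    simp only [Finset.mem_filter, Finset.mem_product, Finset.mem_range] at hp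
    simp only [Finset.mem_sigma, Finset.mem_range]
    omega
  · intro q hq
    simp only [Finset.mem_sigma, Finset.mem_range] at hq
    simp only [Finset.mem_filter, Finset.mem_product, Finset.mem_range]
    omega
  · intro p hp
    simp
  · intro q hq
    simp only [Finset.mem_sigma, Finset.mem_range] at hq
    ext <;> simp <;> omega
  · intro p hp
    simp only [Finset.mem_filter, Finset.mem_product, Finset.mem_range] at hp
    have h2 : p.1 + p.2 - p.1 = p.2 := by omega
    rw [h2]

end F
section H
open Polynomial Finset

lemma prod_sub_range (i : ℕ) : (∏ j ∈ Finset.range i, ((i : ℝ) - (j : ℕ))) = i.factorial := by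
  have h1 : (∏ j ∈ Finset.range i, ((i : ℝ) - (j : ℕ)))
      = ((∏ j ∈ Finset.range i, (i - j) : ℕ) : ℝ) := by
    rw [Nat.cast_prod]
    refine Finset.prod_congr rfl fun j hj => ?_
    rw [Finset.mem_range] at hj
    rw [Nat.cast_sub hj.le]
  rw [h1]
  norm_cast
  calc (∏ j ∈ Finset.range i, (i - j)) = ∏ j ∈ Finset.range i, (j + 1) := by
        rw [← Finset.prod_range_reflect]
        exact Finset.prod_congr rfl fun j hj => by rw [Finset.mem_range] at hj; omega
    _ = i.factorial := Finset.prod_range_add_one_eq_factorial i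

lemma prod_sub_Ico (i n : ℕ) (hin : i ≤ n) :
    (∏ j ∈ Finset.Ico (i+1) (n+1), ((i : ℝ) - (j : ℕ)))
      = (-1 : ℝ) ^ (n - i) * (n - i).factorial := by
  have h1 : ∀ j ∈ Finset.Ico (i+1) (n+1), ((i : ℝ) - (j : ℕ)) = -1 * ((j - i : ℕ) : ℝ) := by
    intro j hj
    rw [Finset.mem_Ico] at hj
    rw [Nat.cast_sub (by omega)]
    ring
  rw [Finset.prod_congr rfl h1, Finset.prod_mul_distrib, Finset.prod_const, Nat.card_Ico]
  have h2 : n + 1 - (i + 1) = n - i := by omega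
  rw [h2, ← Nat.cast_prod]
  congr 1
  norm_cast
  rw [Finset.prod_Ico_eq_prod_range, h2]
  calc (∏ t ∈ Finset.range (n - i), (i + 1 + t - i)) = ∏ t ∈ Finset.range (n-i), (t + 1) :=
        Finset.prod_congr rfl fun t ht => by omega
    _ = (n - i).factorial := Finset.prod_range_add_one_eq_factorial _

lemma erase_range_eq (n i : ℕ) (hin : i ≤ n) :
    (Finset.range (n+1)).erase i = Finset.range i ∪ Finset.Ico (i+1) (n+1) := by
  ext x
  simp only [Finset.mem_erase, Finset.mem_range, Finset.mem_union, Finset.mem_Ico]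
  omega

lemma w_eq (n i : ℕ) (hin : i ≤ n) :
    (∏ j ∈ (Finset.range (n+1)).erase i, ((i : ℝ) - (j : ℕ)))
      = (-1 : ℝ) ^ (n - i) * (i.factorial * (n - i).factorial) := by
  rw [erase_range_eq n i hin, Finset.prod_union (by
    rw [Finset.disjoint_left]; intro a ha hb
    rw [Finset.mem_range] at ha; rw [Finset.mem_Ico] at hb; omega)]
  rw [prod_sub_range, prod_sub_Ico i n hin]
  ring

lemma nfac_mul_winv (n i : ℕ) (hin : i ≤ n) :
    (n.factorial : ℝ) * (∏ j ∈ (Finset.range (n+1)).erase i, ((i : ℝ) - (j : ℕ)))⁻¹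
      = (((-1 : ℤ) ^ (n - i) * (n.choose i : ℤ) : ℤ) : ℝ) := by
  rw [w_eq n i hin]
  have h1 : (i.factorial : ℝ) ≠ 0 := Nat.cast_ne_zero.mpr (Nat.factorial_ne_zero i)
  have h2 : ((n - i).factorial : ℝ) ≠ 0 := Nat.cast_ne_zero.mpr (Nat.factorial_ne_zero _)
  have hch : (n.choose i : ℝ) * i.factorial * (n - i).factorial = n.factorial := by
    exact_mod_cast congrArg (Nat.cast : ℕ → ℝ) (Nat.choose_mul_factorial_mul_factorial hin)
  have hs : ((-1 : ℝ)) ^ (n - i) ≠ 0 := pow_ne_zero _ (by norm_num)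
  push_cast
  field_simp
  nlinarith [hch, sq_nonneg ((-1:ℝ)^(n-i)), pow_mul_pow_eq_one (n-i) (by norm_num : (-1:ℝ) * -1 = 1)]
end H
section J
open Polynomial Finset

lemma basis_int (n i : ℕ) (hin : i ≤ n) :
    ∃ gb : ℤ[X], (n.factorial : ℝ) • Lagrange.basis (Finset.range (n+1)) (fun j : ℕ => (j:ℝ)) i
      = gb.map (Int.castRingHom ℝ) := by
  refine ⟨Polynomial.C ((-1 : ℤ) ^ (n - i) * (n.choose i : ℤ)) *
    ∏ j ∈ (Finset.range (n+1)).erase i, (X - Polynomial.C (j : ℤ)), ?_⟩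
  rw [Lagrange.basis]
  simp only [Lagrange.basisDivisor]
  rw [Finset.prod_mul_distrib, ← map_prod (Polynomial.C : ℝ →+* ℝ[X]), Finset.prod_inv_distrib]
  rw [smul_eq_C_mul, ← mul_assoc, ← C_mul, nfac_mul_winv n i hin]
  rw [Polynomial.map_mul, Polynomial.map_C, Polynomial.map_prod]
  congr 1
  refine Finset.prod_congr rfl fun j hj => ?_
  rw [Polynomial.map_sub, Polynomial.map_X, Polynomial.map_C]
  norm_num

lemma M_denom (n : ℕ) (f : ℝ[X]) (hdeg : f.degree < ((n+1 : ℕ) : WithBot ℕ))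
    (hint : ∀ m : ℤ, ∃ z : ℤ, f.eval ((m : ℤ) : ℝ) = (z : ℝ)) :
    ∃ g : ℤ[X], (n.factorial : ℝ) • f = g.map (Int.castRingHom ℝ) := by
  classical
  have hvs : Set.InjOn (fun j : ℕ => (j : ℝ)) (Finset.range (n+1)) :=
    fun a _ b _ h => Nat.cast_injective h
  have hcard : f.degree < #(Finset.range (n+1)) := by simpa using hdeg
  have heq := Lagrange.eq_interpolate hvs hcard
  rw [Lagrange.interpolate_apply] at heq
  choose z hz using hint
  set gbf : ℕ → ℤ[X] := fun i => if h : i ≤ n then (basis_int n i h).choose else 0 with hgbf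
  have hgb : ∀ i ≤ n, (n.factorial : ℝ) •
      Lagrange.basis (Finset.range (n+1)) (fun j : ℕ => (j:ℝ)) i
        = (gbf i).map (Int.castRingHom ℝ) := by
    intro i hi
    rw [hgbf]
    simp only [hi, dif_pos]
    exact (basis_int n i hi).choose_spec
  refine ⟨∑ i ∈ Finset.range (n+1), Polynomial.C (z (i : ℤ)) * gbf i, ?_⟩
  conv_lhs => rw [heq]
  rw [Finset.smul_sum, Polynomial.map_sum]
  refine Finset.sum_congr rfl fun i hi => ?_
  rw [Finset.mem_range] at hi
  have hi' : i ≤ n := by omega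
  have he : eval ((i:ℕ):ℝ) f = ((z (i:ℤ) : ℤ) : ℝ) := by
    have h0 := hz (i : ℤ)
    push_cast at h0 ⊢
    exact h0
  rw [he, Polynomial.map_mul, Polynomial.map_C, ← hgb i hi', mul_smul_comm]
  simp
end J
section L
open Polynomial Finset

lemma mapsTo_expE (n : ℕ) (a : ℤ) (k : ℕ) (hk : 1 ≤ k) :
    Set.MapsTo (expE n (((a : ℝ) * (n.factorial : ℝ)) • Dop n ^ k)) (MsetV n) (MsetV n) := by
  intro f hf m
  obtain ⟨g, hg⟩ := M_denom n (f : ℝ[X]) (by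
    have h2 : (f : ℝ[X]) ∈ Polynomial.degreeLT ℝ (n+1) := f.2
    rwa [Polynomial.mem_degreeLT] at h2) hf
  have hterm : ∀ j ∈ Finset.range (n+1), ∃ z : ℤ,
      (((j.factorial : ℝ))⁻¹ * ((a : ℝ) * (n.factorial : ℝ)) ^ j)
        * (derivative^[k * j] (f : ℝ[X])).eval (m : ℝ) = (z : ℝ) := by
    intro j hj
    rcases Nat.eq_zero_or_pos j with rfl | hj1
    · simpa using hf m
    rcases le_or_gt (n + 1) (k * j) with hbig | hsmall
    · refine ⟨0, ?_⟩
      rw [iterate_derivative_eq_zero (lt_of_lt_of_le (natDegree_lt n f) hbig)]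
      simp
    · have hjn : j ≤ n := by nlinarith
      have hdvd : (j.factorial * n.factorial) ∣ n.factorial ^ j := by
        rcases eq_or_lt_of_le (Nat.succ_le_of_lt hj1) with h1 | h2
        · rw [← h1]; simpa using dvd_pow_self n.factorial one_ne_zero
        · calc j.factorial * n.factorial ∣ n.factorial * n.factorial :=
                mul_dvd_mul_right (Nat.factorial_dvd_factorial hjn) _
            _ = n.factorial ^ 2 := (sq n.factorial).symm
            _ ∣ n.factorial ^ j := pow_dvd_pow _ h2
      obtain ⟨e, he⟩ := hdvd
      refine ⟨a ^ j * e * (derivative^[k * j] g).eval m, ?_⟩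
      have hje : (j.factorial : ℝ) ≠ 0 := Nat.cast_ne_zero.mpr (Nat.factorial_ne_zero j)
      have hsc : ((j.factorial : ℝ))⁻¹ * ((a : ℝ) * (n.factorial : ℝ)) ^ j
          = (a : ℝ) ^ j * e * (n.factorial : ℝ) := by
        have hcast : ((n.factorial : ℝ)) ^ j
            = (j.factorial : ℝ) * (n.factorial : ℝ) * (e : ℝ) := by
          exact_mod_cast congrArg (Nat.cast : ℕ → ℝ) (by linarith [he] : n.factorial ^ j = j.factorial * n.factorial * e)
        rw [mul_pow, hcast]
        field_simp
      have hev : (n.factorial : ℝ) * (derivative^[k * j] (f : ℝ[X])).eval (m : ℝ)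
          = (((derivative^[k * j] g).eval m : ℤ) : ℝ) := by
        have h1 : (n.factorial : ℝ) • derivative^[k * j] (f : ℝ[X])
            = (derivative^[k * j] g).map (Int.castRingHom ℝ) := by
          rw [← iterate_derivative_smul, hg, iterate_derivative_map]
        have h2 := congrArg (fun p => Polynomial.eval ((m : ℤ) : ℝ) p) h1
        simp only [eval_smul, smul_eq_mul, eval_intCast_map] at h2
        simpa using h2
      rw [hsc]
      push_cast
      calc (a:ℝ) ^ j * (e:ℝ) * (n.factorial : ℝ) * eval (m:ℝ) (derivative^[k*j] (f : ℝ[X]))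
          = (a:ℝ) ^ j * (e:ℝ) * ((n.factorial : ℝ) * eval (m:ℝ) (derivative^[k*j] (f : ℝ[X]))) := by ring
        _ = (a:ℝ) ^ j * (e:ℝ) * ((((derivative^[k * j] g).eval m : ℤ)) : ℝ) := by rw [hev]
  choose zf hzf using hterm
  refine ⟨∑ j ∈ (Finset.range (n+1)).attach, zf j j.2, ?_⟩
  rw [coe_expE, eval_finset_sum]
  rw [← Finset.sum_attach (Finset.range (n+1))]
  push_cast
  refine Finset.sum_congr rfl fun j _ => ?_
  rw [eval_smul, smul_eq_mul]
  exact hzf j j.2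
end L

end Aux

/-- For every `n` and every `i` with `1 ≤ i ≤ ⌊(n+1)/2⌋`, the operator `exp(n!·D^{2i-1})`
maps the lattice `M_n` bijectively onto itself; moreover these `⌊(n+1)/2⌋` operators
are linearly independent: `exp(b₁·n!·D) ∘ exp(b₂·n!·D³) ∘ ⋯ ∘ exp(b_k·n!·D^{2k-1}) = id`
with `bᵢ ∈ ℤ` forces `b₁ = ⋯ = b_k = 0`. -/
theorem exp_factorial_D_bijOn_and_independent (n : ℕ) :
    (∀ i : ℕ, 1 ≤ i → i ≤ (n + 1) / 2 →
      Set.BijOn (⇑(expE n ((n.factorial : ℝ) • (Dop n) ^ (2 * i - 1))))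
        (MsetV n) (MsetV n)) ∧
    (∀ b : Fin ((n + 1) / 2) → ℤ,
      (List.ofFn fun i : Fin ((n + 1) / 2) =>
        expE n (((b i : ℝ) * (n.factorial : ℝ)) • (Dop n) ^ (2 * (i : ℕ) + 1))).prod = 1 →
      ∀ i, b i = 0) := by
  constructor
  · intro i hi1 hi2
    set k := 2 * i - 1 with hk
    have hk1 : 1 ≤ k := by omega
    have hFG : expE n ((n.factorial : ℝ) • Dop n ^ k)
        * expE n ((-(n.factorial : ℝ)) • Dop n ^ k) = 1 := by
      rw [expE_mul n k hk1, add_neg_cancel, zero_smul, expE_zero]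
    have hGF : expE n ((-(n.factorial : ℝ)) • Dop n ^ k)
        * expE n ((n.factorial : ℝ) • Dop n ^ k) = 1 := by
      rw [expE_mul n k hk1, neg_add_cancel, zero_smul, expE_zero]
    have hMF : Set.MapsTo (⇑(expE n ((n.factorial : ℝ) • Dop n ^ k))) (MsetV n) (MsetV n) := by
      have h := mapsTo_expE n 1 k hk1
      simpa using h
    have hMG : Set.MapsTo (⇑(expE n ((-(n.factorial : ℝ)) • Dop n ^ k)))
        (MsetV n) (MsetV n) := by
      have h := mapsTo_expE n (-1) k hk1
      simpa using h
    refine Set.InvOn.bijOn ⟨fun x _ => ?_, fun x _ => ?_⟩ hMF hMG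
    · have h := LinearMap.ext_iff.mp hGF x
      rwa [Module.End.mul_apply, Module.End.one_apply] at h
    · have h := LinearMap.ext_iff.mp hFG x
      rwa [Module.End.mul_apply, Module.End.one_apply] at h
  · intro b hprod
    have H : ∀ m : ℕ, ∀ i : Fin ((n+1)/2), (i : ℕ) = m → b i = 0 := by
      intro m
      induction m using Nat.strong_induction_on with
      | _ m ih =>
        intro i him
        have hn1 : 1 ≤ n := by have := i.2; omega
        have h2i : 2 * (i : ℕ) + 1 ≤ n := by have := i.2; omega
        have hxmem : (X ^ (2 * (i : ℕ) + 1) : ℝ[X]) ∈ Polynomial.degreeLT ℝ (n+1) := by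
          rw [Polynomial.mem_degreeLT, Polynomial.degree_X_pow]
          exact_mod_cast (by omega : 2 * (i : ℕ) + 1 < n + 1)
        have hymem : (1 : ℝ[X]) ∈ Polynomial.degreeLT ℝ (n+1) := by
          rw [Polynomial.mem_degreeLT, Polynomial.degree_one]
          exact_mod_cast (by omega : (0:ℕ) < n + 1)
        have hkey := key n hn1 ((n+1)/2) (fun j => (b j : ℝ) * (n.factorial : ℝ))
          (fun j => 2 * (j : ℕ) + 1) i ⟨X ^ (2 * (i : ℕ) + 1), hxmem⟩ ⟨1, hymem⟩ rfl rfl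
          (by show 1 ≤ 2 * (i : ℕ) + 1; omega)
          (fun j hj => by
            show 2 * (i : ℕ) + 1 < 2 * (j : ℕ) + 1
            rw [Fin.lt_def] at hj; omega)
          (fun j hj => by
            rw [Fin.lt_def] at hj
            show ((b j : ℝ)) * (n.factorial : ℝ) = 0
            rw [ih (j : ℕ) (by omega) j rfl]
            simp)
        rw [hprod, Module.End.one_apply] at hkey
        have hz : (((b i : ℝ) * (n.factorial : ℝ)) * (((2 * (i : ℕ) + 1).factorial : ℝ)))
            • (⟨1, hymem⟩ : V n) = 0 := left_eq_add.mp hkey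
        have hy0 : (⟨1, hymem⟩ : V n) ≠ 0 := by
          intro h
          have h1 : (1 : ℝ[X]) = 0 := by simpa using congrArg Subtype.val h
          exact one_ne_zero h1
        have hsc : ((b i : ℝ) * (n.factorial : ℝ)) * (((2 * (i : ℕ) + 1).factorial : ℝ)) = 0 := by
          rcases smul_eq_zero.mp hz with h | h
          · exact h
          · exact absurd h hy0
        have f1 : (n.factorial : ℝ) ≠ 0 := Nat.cast_ne_zero.mpr (Nat.factorial_ne_zero n)
        have f2 : (((2 * (i : ℕ) + 1).factorial : ℝ)) ≠ 0 :=
          Nat.cast_ne_zero.mpr (Nat.factorial_ne_zero _)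
        have hbi : (b i : ℝ) = 0 := by
          rcases mul_eq_zero.mp hsc with h | h
          · rcases mul_eq_zero.mp h with h' | h'
            · exact h'
            · exact absurd h' f1
          · exact absurd h f2
        exact_mod_cast hbi
    exact fun i => H (i : ℕ) i rfl
end

section
/- Let k = ⌊(n+1)/2⌋ and let a_1, a_2, …, a_k be real numbers such that the operator exp(a_1·D + a_2·D^3 + a_3·D^5 + ⋯ + a_k·D^{2k−1}) maps the lattice M_n into itself. Then a_1 ∈ ℤ. Moreover, in that case, for every integer b_1 the operator exp(b_1·D + a_2·D^3 + a_3·D^5 + ⋯ + a_k·D^{2k−1}) also maps M_n into itself. -/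
open Polynomial

lemma Dop_coe (n : ℕ) (p : V n) : ((Dop n p : V n) : ℝ[X]) = derivative (p : ℝ[X]) :=
  rfl

lemma Dpow_coe (n k : ℕ) (p : V n) :
    (((Dop n ^ k) p : V n) : ℝ[X]) = (derivative (R := ℝ))^[k] (p : ℝ[X]) := by
  induction k generalizing p with
  | zero => simp
  | succ k ih =>
    rw [pow_succ', Module.End.mul_apply, Dop_coe, ih, Function.iterate_succ_apply']

lemma natDegree_lt_of_memV (n : ℕ) (p : V n) : (p : ℝ[X]).natDegree < n + 1 := by
  have hp : (p : ℝ[X]) ∈ Polynomial.degreeLT ℝ (n + 1) := p.2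
  rw [Polynomial.mem_degreeLT] at hp
  rcases eq_or_ne (p : ℝ[X]) 0 with h | h
  · simp [h]
  · exact (Polynomial.natDegree_lt_iff_degree_lt h).mpr hp

lemma Dpow_nilpotent (n : ℕ) : (Dop n) ^ (n + 1) = 0 := by
  apply LinearMap.ext
  intro p
  apply Subtype.ext
  rw [Dpow_coe]
  simpa using Polynomial.iterate_derivative_eq_zero (natDegree_lt_of_memV n p)

lemma expE_apply (n : ℕ) (N : Module.End ℝ (V n)) (p : V n) :
    expE n N p = ∑ j ∈ Finset.range (n + 1), ((j.factorial : ℝ))⁻¹ • ((N ^ j) p) := by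
  simp [expE, LinearMap.sum_apply]

lemma coeff_fact (j m : ℕ) (hm : m ≤ j) :
    ((j.factorial : ℝ))⁻¹ * (j.choose m : ℝ) =
      ((m.factorial : ℝ))⁻¹ * (((j - m).factorial : ℝ))⁻¹ := by
  have h : (j.choose m : ℝ) * m.factorial * (j - m).factorial = j.factorial := by
    exact_mod_cast congrArg (Nat.cast : ℕ → ℝ) (Nat.choose_mul_factorial_mul_factorial hm)
  field_simp
  nlinarith [h]

lemma expE_mul_s12 (n : ℕ) (A B : Module.End ℝ (V n)) (hc : Commute A B)
    (hz : ∀ p q : ℕ, n + 1 ≤ p + q → A ^ p * B ^ q = 0) :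
    expE n (A + B) = expE n A * expE n B := by
  unfold expE
  -- Notation for the general term
  set F : ℕ → ℕ → Module.End ℝ (V n) := fun p q =>
    (((p.factorial : ℝ))⁻¹ * ((q.factorial : ℝ))⁻¹) • (A ^ p * B ^ q) with hF
  have hRHS : (∑ p ∈ Finset.range (n + 1), ((p.factorial : ℝ))⁻¹ • A ^ p) *
      (∑ q ∈ Finset.range (n + 1), ((q.factorial : ℝ))⁻¹ • B ^ q) =
      ∑ p ∈ Finset.range (n + 1), ∑ q ∈ Finset.range (n + 1), F p q := by
    rw [Finset.sum_mul_sum]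
    refine Finset.sum_congr rfl fun p _ => Finset.sum_congr rfl fun q _ => ?_
    rw [hF, smul_mul_smul_comm]
  have hLHS : ∑ j ∈ Finset.range (n + 1), ((j.factorial : ℝ))⁻¹ • (A + B) ^ j =
      ∑ j ∈ Finset.range (n + 1), ∑ m ∈ Finset.range (j + 1), F m (j - m) := by
    refine Finset.sum_congr rfl fun j _ => ?_
    rw [hc.add_pow, Finset.smul_sum]
    refine Finset.sum_congr rfl fun m hm => ?_
    have hm' : m ≤ j := Nat.lt_succ_iff.mp (Finset.mem_range.mp hm)
    have : (j.choose m : Module.End ℝ (V n)) = ((j.choose m : ℝ)) • 1 := by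
      rw [← Algebra.algebraMap_eq_smul_one]
      simp
    rw [this, mul_smul_comm, mul_one, smul_smul, coeff_fact j m hm', hF]
  rw [hLHS, hRHS]
  -- Replace inner range on RHS by the triangle, since terms with p+q > n vanish
  have hvanish : ∀ p q : ℕ, n + 1 ≤ p + q → F p q = 0 := by
    intro p q hpq; rw [hF]; simp [hz p q hpq]
  have hRHS' : ∑ p ∈ Finset.range (n + 1), ∑ q ∈ Finset.range (n + 1), F p q =
      ∑ p ∈ Finset.range (n + 1), ∑ q ∈ Finset.range (n + 1 - p), F p q := by
    refine Finset.sum_congr rfl fun p hp => ?_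
    refine (Finset.sum_subset ?_ ?_).symm
    · exact Finset.range_subset_range.mpr (by omega)
    · intro q hq hq'
      rw [Finset.mem_range] at hq hq'
      exact hvanish p q (by omega)
  rw [hRHS']
  rw [Finset.sum_sigma', Finset.sum_sigma']
  refine Finset.sum_nbij' (fun x => ⟨x.2, x.1 - x.2⟩) (fun x => ⟨x.1 + x.2, x.1⟩)
    ?_ ?_ ?_ ?_ ?_
  · rintro ⟨j, m⟩ hx
    simp only [Finset.mem_sigma, Finset.mem_range] at hx ⊢
    omega
  · rintro ⟨p, q⟩ hx
    simp only [Finset.mem_sigma, Finset.mem_range] at hx ⊢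
    omega
  · rintro ⟨j, m⟩ hx
    simp only [Finset.mem_sigma, Finset.mem_range] at hx
    have : m + (j - m) = j := by omega
    simp [this]
  · rintro ⟨p, q⟩ hx
    simp only [Finset.mem_sigma, Finset.mem_range] at hx
    have : p + q - p = q := by omega
    simp [this]
  · rintro ⟨j, m⟩ hx
    rfl

lemma shift_mapsTo (n : ℕ) (z : ℤ) :
    Set.MapsTo (⇑(expE n ((z : ℝ) • Dop n))) (MsetV n) (MsetV n) := by
  intro p hp
  intro m
  obtain ⟨w, hw⟩ := hp (z + m)
  refine ⟨w, ?_⟩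
  have key : ((expE n ((z : ℝ) • Dop n) p : V n) : ℝ[X]).eval (m : ℝ) =
      (p : ℝ[X]).eval ((z : ℝ) + (m : ℝ)) := by
    rw [expE_apply]
    have hterm : ∀ j : ℕ, (((((j.factorial : ℝ))⁻¹ • ((((z : ℝ) • Dop n) ^ j) p) : V n)) : ℝ[X]).eval (m : ℝ)
        = (Polynomial.hasseDeriv j (p : ℝ[X])).eval (m : ℝ) * (z : ℝ) ^ j := by
      intro j
      have h1 : ((((z : ℝ) • Dop n) ^ j) p : V n) = ((z : ℝ) ^ j) • ((Dop n ^ j) p) := by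
        rw [_root_.smul_pow]; simp
      rw [h1]
      have h2 : (derivative (R := ℝ))^[j] (p : ℝ[X]) =
          (j.factorial : ℝ) • Polynomial.hasseDeriv j (p : ℝ[X]) := by
        rw [Nat.cast_smul_eq_nsmul ℝ]
        exact congrFun (Polynomial.factorial_smul_hasseDeriv (R := ℝ) j).symm (p : ℝ[X])
      push_cast [Submodule.coe_smul, Dpow_coe, h2]
      rw [Polynomial.eval_smul, Polynomial.eval_smul, Polynomial.eval_smul]
      have : (j.factorial : ℝ) ≠ 0 := Nat.cast_ne_zero.mpr (Nat.factorial_ne_zero j)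
      field_simp
      ring_nf
      rw [mul_right_comm _ _ ((z : ℝ) ^ j), mul_inv_cancel_right₀ this]
    calc ((∑ j ∈ Finset.range (n + 1), ((j.factorial : ℝ))⁻¹ • ((((z : ℝ) • Dop n) ^ j) p) : V n) : ℝ[X]).eval (m : ℝ)
        = ∑ j ∈ Finset.range (n + 1),
            ((((j.factorial : ℝ))⁻¹ • ((((z : ℝ) • Dop n) ^ j) p) : V n) : ℝ[X]).eval (m : ℝ) := by
          rw [Submodule.coe_sum, Polynomial.eval_finset_sum]
      _ = ∑ j ∈ Finset.range (n + 1),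
            (Polynomial.taylor (m : ℝ) (p : ℝ[X])).coeff j * (z : ℝ) ^ j := by
          refine Finset.sum_congr rfl fun j _ => ?_
          rw [hterm j, Polynomial.taylor_coeff]
      _ = (Polynomial.taylor (m : ℝ) (p : ℝ[X])).eval (z : ℝ) := by
          refine (Polynomial.eval_eq_sum_range' ?_ _).symm
          rw [Polynomial.natDegree_taylor]
          exact natDegree_lt_of_memV n p
      _ = (p : ℝ[X]).eval ((z : ℝ) + (m : ℝ)) := Polynomial.taylor_eval _ _ _
  rw [key]
  push_cast at hw ⊢
  exact hw


/-- Let `k = ⌊(n+1)/2⌋` and let `a₁, …, a_k` be real numbers such that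
`exp(a₁·D + a₂·D³ + ⋯ + a_k·D^{2k-1})` maps the lattice `M_n` into itself. Then
`a₁ ∈ ℤ`, and for every integer `b₁` the operator
`exp(b₁·D + a₂·D³ + ⋯ + a_k·D^{2k-1})` also maps `M_n` into itself.
(Indices: the coefficient `a_{i+1}` multiplies `D^{2(i+1)-1} = D^{2i+1}`, so `a₁`
is the coefficient of `D`, i.e. the value at the index `i = 0`.) -/
theorem first_exp_coefficient_integral (n : ℕ) (a : Fin ((n + 1) / 2) → ℝ)
    (h : Set.MapsTo
      (⇑(expE n (∑ i : Fin ((n + 1) / 2), a i • (Dop n) ^ (2 * (i : ℕ) + 1))))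
      (MsetV n) (MsetV n)) :
    (∀ i : Fin ((n + 1) / 2), (i : ℕ) = 0 → ∃ z : ℤ, a i = (z : ℝ)) ∧
    (∀ b : ℤ, Set.MapsTo
      (⇑(expE n (∑ i : Fin ((n + 1) / 2),
        (if (i : ℕ) = 0 then (b : ℝ) else a i) • (Dop n) ^ (2 * (i : ℕ) + 1))))
      (MsetV n) (MsetV n)) := by
  rcases Nat.eq_zero_or_pos ((n + 1) / 2) with hk | hk
  · constructor
    · intro i _
      exact absurd i.2 (by omega)
    · intro b
      have heq : (∑ i : Fin ((n + 1) / 2),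
          (if (i : ℕ) = 0 then (b : ℝ) else a i) • (Dop n) ^ (2 * (i : ℕ) + 1)) =
          ∑ i : Fin ((n + 1) / 2), a i • (Dop n) ^ (2 * (i : ℕ) + 1) :=
        Finset.sum_congr rfl fun i _ => absurd i.2 (by omega)
      rw [heq]
      exact h
  · have hn : 1 ≤ n := by omega
    set i0 : Fin ((n + 1) / 2) := ⟨0, hk⟩ with hi0
    set N := ∑ i : Fin ((n + 1) / 2), a i • (Dop n) ^ (2 * (i : ℕ) + 1) with hN
    have hXmem : (X : ℝ[X]) ∈ V n := by
      rw [V, Polynomial.mem_degreeLT, Polynomial.degree_X]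
      exact_mod_cast by omega
    set fX : V n := ⟨X, hXmem⟩ with hfX
    have hfXmem : fX ∈ MsetV n := fun m => ⟨m, by simp [hfX]⟩
    have happ : ∀ v : V n, ((N v : V n) : ℝ[X]) =
        ∑ i : Fin ((n + 1) / 2), a i • ((derivative (R := ℝ))^[2 * (i : ℕ) + 1] (v : ℝ[X])) := by
      intro v
      rw [hN]
      simp [LinearMap.sum_apply, LinearMap.smul_apply, Dpow_coe]
    have hconst : ∀ (v : V n) (c : ℝ), (v : ℝ[X]) = C c → N v = 0 := by
      intro v c hv
      apply Subtype.ext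
      rw [happ v, hv]
      have : ∀ i : Fin ((n + 1) / 2), (derivative (R := ℝ))^[2 * (i : ℕ) + 1] (C c) = 0 :=
        fun i => Polynomial.iterate_derivative_eq_zero (by simp [Polynomial.natDegree_C])
      simp [this]
    have hNfX : ((N fX : V n) : ℝ[X]) = C (a i0) := by
      rw [happ]
      rw [Finset.sum_eq_single i0]
      · simp [hfX, hi0]
        rw [← Polynomial.C_1, Polynomial.smul_C, smul_eq_mul, mul_one]
      · intro i _ hne
        have hge : 2 ≤ 2 * (i : ℕ) + 1 := by
          have : (i : ℕ) ≠ 0 := fun hc => hne (Fin.ext (by simp [hc, hi0]))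
          omega
        rw [Polynomial.iterate_derivative_eq_zero
          (by simp only [hfX]; rw [Polynomial.natDegree_X]; omega)]
        simp
      · intro hmem
        exact absurd (Finset.mem_univ i0) hmem
    have hpow2 : ∀ m : ℕ, (N ^ (m + 2)) fX = 0 := by
      intro m
      have h2 : (N ^ 2) fX = 0 := by
        rw [pow_two, Module.End.mul_apply]
        exact hconst _ (a i0) hNfX
      rw [pow_add, Module.End.mul_apply, h2, map_zero]
    have hEfX : ((expE n N fX : V n) : ℝ[X]) = X + C (a i0) := by
      rw [expE_apply]
      have hsplit : ∑ j ∈ Finset.range (n + 1), ((j.factorial : ℝ))⁻¹ • ((N ^ j) fX)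
          = ∑ j ∈ ({0, 1} : Finset ℕ), ((j.factorial : ℝ))⁻¹ • ((N ^ j) fX) := by
        refine (Finset.sum_subset ?_ ?_).symm
        · intro x hx
          rw [Finset.mem_insert, Finset.mem_singleton] at hx
          rw [Finset.mem_range]
          omega
        · intro j _ hj'
          simp only [Finset.mem_insert, Finset.mem_singleton] at hj'
          obtain ⟨m, rfl⟩ : ∃ m, j = m + 2 := ⟨j - 2, by omega⟩
          rw [hpow2, smul_zero]
      rw [hsplit, Finset.sum_insert (by simp), Finset.sum_singleton]
      simp [hNfX, hfX]
      exact hNfX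
    obtain ⟨z₀, hz₀⟩ := h hfXmem 0
    rw [hEfX] at hz₀
    simp at hz₀
    constructor
    · intro i hi
      have hii : i = i0 := Fin.ext (by simp [hi, hi0])
      exact ⟨z₀, by rw [hii]; exact hz₀⟩
    · intro b
      set c : ℝ := (((b - z₀ : ℤ)) : ℝ) with hc
      have hdecomp : (∑ i : Fin ((n + 1) / 2),
          (if (i : ℕ) = 0 then (b : ℝ) else a i) • (Dop n) ^ (2 * (i : ℕ) + 1)) =
          c • Dop n + N := by
        rw [hN, ← Finset.add_sum_erase _ _ (Finset.mem_univ i0),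
          ← Finset.add_sum_erase _ (fun i => a i • (Dop n) ^ (2 * (i : ℕ) + 1))
            (Finset.mem_univ i0)]
        have herase : ∑ i ∈ Finset.univ.erase i0,
            (if (i : ℕ) = 0 then (b : ℝ) else a i) • (Dop n) ^ (2 * (i : ℕ) + 1) =
            ∑ i ∈ Finset.univ.erase i0, a i • (Dop n) ^ (2 * (i : ℕ) + 1) := by
          refine Finset.sum_congr rfl fun i hi => ?_
          have hne : i ≠ i0 := Finset.ne_of_mem_erase hi
          have : (i : ℕ) ≠ 0 := fun hcc => hne (Fin.ext (by simp [hcc, hi0]))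
          simp [this]
        rw [herase]
        rw [if_pos (show ((i0 : ℕ) = 0) from rfl)]
        have h1 : (2 * (i0 : ℕ) + 1) = 1 := by simp [hi0]
        rw [h1, pow_one, hz₀, hc]
        push_cast
        module
      rw [hdecomp]
      have hDN : Commute (Dop n) N := by
        rw [hN]
        refine Commute.sum_right _ _ _ fun i _ => ?_
        exact ((Commute.refl (Dop n)).pow_right _).smul_right _
      have hcomm : Commute (c • Dop n) N := hDN.smul_left c
      set Mo := ∑ i : Fin ((n + 1) / 2), a i • (Dop n) ^ (2 * (i : ℕ)) with hMo
      have hDM : Commute (Dop n) Mo := by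
        rw [hMo]
        refine Commute.sum_right _ _ _ fun i _ => ?_
        exact ((Commute.refl (Dop n)).pow_right _).smul_right _
      have hNM : N = Dop n * Mo := by
        rw [hN, hMo, Finset.mul_sum]
        refine Finset.sum_congr rfl fun i _ => ?_
        rw [mul_smul_comm, ← pow_succ']
      have hzz : ∀ p q : ℕ, n + 1 ≤ p + q → (c • Dop n) ^ p * N ^ q = 0 := by
        intro p q hpq
        obtain ⟨r, hr⟩ : ∃ r, p + q = (n + 1) + r := ⟨p + q - (n + 1), by omega⟩
        rw [_root_.smul_pow, hNM, hDM.mul_pow, smul_mul_assoc, ← mul_assoc, ← pow_add, hr,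
          pow_add, Dpow_nilpotent, zero_mul, zero_mul, smul_zero]
      rw [expE_mul_s12 n _ _ hcomm hzz]
      intro x hx
      rw [Module.End.mul_apply, hc]
      exact shift_mapsTo n (b - z₀) (h hx)
end

section
/- Let k = ⌊(n+1)/2⌋ and let a_1, …, a_k be real numbers. If the operator φ = exp(a_1·D + a_2·D^3 + ⋯ + a_k·D^{2k−1}) maps the single polynomial γ_n(t) = C(t+n, n) = (t+1)(t+2)⋯(t+n)/n! to an integer-valued polynomial (an element of M_n), then φ maps the whole lattice M_n into itself (and in fact bijectively onto itself). -/
/-!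
The operator `φ` is a polynomial in `D`, so it commutes with integer translations and hence
with the difference operator `Δ f = f(t + 1) - f(t)`. By Newton's forward-difference formula
the binomial polynomials `C(t, j)`, `j ≤ n`, span `M_n` over `ℤ`, and `C(t, j)` is the translate
by `-n` of `Δ^(n-j) γ_n`; so `φ` maps `M_n` into itself as soon as it maps `γ_n` there.
Moreover `φ - 1` is nilpotent, so the inverse of `φ` is the geometric series in `1 - φ`,
which preserves `M_n` too.
-/

open Polynomial

theorem Commute.aeval_left {R A : Type*} [CommSemiring R] [Semiring A] [Algebra R A] {a b : A}
    (h : Commute a b) (P : R[X]) : Commute (aeval a P) b := by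
  induction P using Polynomial.induction_on' with
  | add p q hp hq => simpa using hp.add_left hq
  | monomial k c =>
    simpa [aeval_monomial] using (Algebra.commute_algebraMap_left c b).mul_left (h.pow_left k)

theorem IsNilpotent.aeval_of_coeff_zero_eq_zero {R A : Type*} [CommSemiring R] [Semiring A]
    [Algebra R A] {a : A} (ha : IsNilpotent a) {P : R[X]} (hP : P.coeff 0 = 0) :
    IsNilpotent (aeval a P) := by
  obtain ⟨S, rfl⟩ := X_dvd_iff.mpr hP
  rw [map_mul, aeval_X]
  exact ((Commute.refl a).aeval_left S).symm.isNilpotent_mul_right ha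

theorem Module.End.bijOn_of_isNilpotent_sub_one {R M : Type*} [Semiring R] [AddCommGroup M]
    [Module R M] {u : Module.End R M} (hu : IsNilpotent (u - 1)) {S : AddSubgroup M}
    (hS : Set.MapsTo u S S) : Set.BijOn u S S := by
  obtain ⟨k, hk⟩ := hu
  have hpow : (1 - u) ^ k = 0 := by rw [← neg_sub, neg_pow, hk, mul_zero]
  -- the inverse of `u = 1 - (1 - u)` is the geometric series in `1 - u`
  set v := ∑ i ∈ Finset.range k, (1 - u) ^ i
  have hvu : v * u = 1 := by simpa [hpow] using geom_sum_mul_neg (1 - u) k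
  have huv : u * v = 1 := by simpa [hpow] using mul_neg_geom_sum (1 - u) k
  have hv : Set.MapsTo v S S := by
    have h1 : Set.MapsTo ⇑(1 - u : Module.End R M) S S := fun x hx => S.sub_mem hx (hS hx)
    intro x hx
    rw [LinearMap.sum_apply]
    exact S.sum_mem fun i _ => by rw [Module.End.coe_pow]; exact h1.iterate i hx
  refine Set.InvOn.bijOn ⟨fun x _ => ?_, fun x _ => ?_⟩ hS hv
  · exact LinearMap.congr_fun hvu x
  · exact LinearMap.congr_fun huv x

theorem LinearMap.coe_aeval_restrict_apply {R M : Type*} [CommSemiring R] [AddCommMonoid M]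
    [Module R M] {f : Module.End R M} {p : Submodule R M} (hf : ∀ x ∈ p, f x ∈ p) (P : R[X])
    (x : p) : (aeval (f.restrict hf) P x : M) = aeval f P x := by
  induction P using Polynomial.induction_on' with
  | add P Q hP hQ => simp [hP, hQ]
  | monomial k c =>
    rw [aeval_monomial, aeval_monomial, Module.End.pow_restrict k hf]
    rfl

theorem Polynomial.commute_derivative_taylor {R : Type*} [CommSemiring R] (r : R) :
    Commute (derivative : Module.End R R[X]) (taylor r) := by
  refine LinearMap.ext fun f => ?_
  simp [taylor_apply, derivative_comp]

theorem Polynomial.commute_taylor {R : Type*} [CommSemiring R] (r s : R) :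
    Commute (taylor r) (taylor s) := by
  refine LinearMap.ext fun f => ?_
  simp [taylor_taylor, add_comm]

def intValued : AddSubgroup ℝ[X] where
  carrier := {f | ∀ m : ℤ, ∃ z : ℤ, f.eval (m : ℝ) = z}
  add_mem' {f g} hf hg m := by
    obtain ⟨z, hz⟩ := hf m
    obtain ⟨w, hw⟩ := hg m
    exact ⟨z + w, by simp [hz, hw]⟩
  zero_mem' _ := ⟨0, by simp⟩
  neg_mem' {f} hf m := by
    obtain ⟨z, hz⟩ := hf m
    exact ⟨-z, by simp [hz]⟩

theorem intCast_smul_mem_intValued {f : ℝ[X]} (hf : f ∈ intValued) (z : ℤ) :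
    (z : ℝ) • f ∈ intValued := by
  rw [Int.cast_smul_eq_zsmul]
  exact zsmul_mem hf z

theorem taylor_mem_intValued {f : ℝ[X]} (hf : f ∈ intValued) (m : ℤ) :
    taylor (m : ℝ) f ∈ intValued := fun k => by
  simpa [taylor_eval] using hf (k + m)

noncomputable def Δ : Module.End ℝ ℝ[X] := taylor 1 - 1

theorem Δ_apply (f : ℝ[X]) : Δ f = taylor 1 f - f := rfl

theorem commute_Δ_taylor (r : ℝ) : Commute Δ (taylor r) :=
  (commute_taylor 1 r).sub_left (Commute.one_left _)

theorem Δ_pow_mem_intValued {f : ℝ[X]} (hf : f ∈ intValued) (k : ℕ) :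
    (Δ ^ k) f ∈ intValued := by
  have hΔ : Set.MapsTo Δ intValued intValued := fun g hg =>
    intValued.sub_mem (by exact_mod_cast taylor_mem_intValued hg 1) hg
  rw [Module.End.coe_pow]
  exact hΔ.iterate k hf

theorem Δ_gam_succ (m : ℕ) : Δ (gam (m + 1)) = taylor 1 (gam m) := by
  refine Polynomial.funext fun x => ?_
  set p := ∏ i ∈ Finset.range m, (x + 1 + (i + 1))
  have h₁ : ∏ i ∈ Finset.range (m + 1), (x + 1 + (i + 1)) = p * (x + 1 + (m + 1)) :=
    Finset.prod_range_succ _ m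
  have h₂ : ∏ i ∈ Finset.range (m + 1), (x + (i + 1)) = p * (x + 1) := by
    rw [Finset.prod_range_succ']
    simp only [p, Nat.cast_add_one, Nat.cast_zero]
    congr 1
    exacts [Finset.prod_congr rfl fun i _ => by ring, by ring]
  have hfac : ((m + 1).factorial : ℝ) = (m + 1) * m.factorial := by
    push_cast [Nat.factorial_succ]; ring
  simp only [Δ_apply, gam, eval_sub, taylor_eval, eval_mul, eval_C, eval_prod, eval_add, eval_X,
    h₁, h₂, hfac]
  field_simp
  ring

theorem Δ_pow_gam {n k : ℕ} (hk : k ≤ n) :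
    (Δ ^ k) (gam n) = taylor (k : ℝ) (gam (n - k)) := by
  induction k with
  | zero => simp
  | succ k ih =>
    obtain ⟨l, hl⟩ : ∃ l, n - k = l + 1 := ⟨n - (k + 1), by omega⟩
    rw [pow_succ', Module.End.mul_apply, ih (by omega), hl, ← Module.End.mul_apply,
      (commute_Δ_taylor _).eq, Module.End.mul_apply, Δ_gam_succ, taylor_taylor,
      show n - (k + 1) = l by omega]
    push_cast
    ring_nf

-- `γ_j(t - j) = t (t - 1) ⋯ (t - j + 1) / j!`, the binomial polynomial `C(t, j)`.
noncomputable def binomPoly (j : ℕ) : ℝ[X] := taylor (-(j : ℝ)) (gam j)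

theorem binomPoly_zero : binomPoly 0 = 1 := by
  simp [binomPoly, gam]

theorem eval_zero_binomPoly_succ (j : ℕ) : (binomPoly (j + 1)).eval 0 = 0 := by
  rw [binomPoly, taylor_eval, gam, eval_mul, eval_prod]
  refine mul_eq_zero_of_right _ (Finset.prod_eq_zero (Finset.self_mem_range_succ j) ?_)
  simp

theorem Δ_binomPoly_succ (j : ℕ) : Δ (binomPoly (j + 1)) = binomPoly j := by
  rw [binomPoly, ← Module.End.mul_apply, (commute_Δ_taylor _).eq, Module.End.mul_apply,
    Δ_gam_succ, taylor_taylor, binomPoly]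
  push_cast
  ring_nf

theorem binomPoly_eq_taylor_Δ_pow_gam {n j : ℕ} (hj : j ≤ n) :
    binomPoly j = taylor (-(n : ℝ)) ((Δ ^ (n - j)) (gam n)) := by
  rw [Δ_pow_gam (Nat.sub_le n j), taylor_taylor, Nat.sub_sub_self hj, Nat.cast_sub hj, binomPoly]
  ring_nf

theorem degree_Δ_lt {f : ℝ[X]} (hf : f ≠ 0) : (Δ f).degree < f.degree := by
  rw [Δ_apply, ← degree_taylor f 1]
  exact degree_sub_lt_left (degree_taylor f 1) ((taylor_eq_zero 1 f).not.mpr hf)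
    (leadingCoeff_taylor 1 f)

theorem Δ_mem_degreeLT {m : ℕ} {f : ℝ[X]} (hf : f ∈ degreeLT ℝ (m + 1)) :
    Δ f ∈ degreeLT ℝ m := by
  rw [mem_degreeLT] at hf ⊢
  rcases eq_or_ne f 0 with rfl | hf0
  · simp
  · exact (degree_Δ_lt hf0).trans_le (Order.le_of_lt_succ (by exact_mod_cast hf))

theorem eq_zero_of_Δ_eq_zero_of_eval_zero {f : ℝ[X]} (hΔ : Δ f = 0) (h₀ : f.eval 0 = 0) :
    f = 0 := by
  have hnat : ∀ k : ℕ, f.eval (k : ℝ) = 0 := by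
    intro k
    induction k with
    | zero => simpa using h₀
    | succ k ih =>
      have := congrArg (eval (k : ℝ)) hΔ
      rwa [Δ_apply, eval_sub, taylor_eval, eval_zero, sub_eq_zero, ih, ← Nat.cast_succ] at this
  exact eq_zero_of_infinite_isRoot f
    (Set.infinite_of_injective_forall_mem Nat.cast_injective hnat)

theorem eq_sum_eval_Δ_pow_smul_binomPoly {m : ℕ} {f : ℝ[X]} (hf : f ∈ degreeLT ℝ m) :
    f = ∑ j ∈ Finset.range m, ((Δ ^ j) f).eval 0 • binomPoly j := by
  induction m generalizing f with
  | zero =>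
    rw [mem_degreeLT, Nat.cast_zero, Nat.WithBot.lt_zero_iff, degree_eq_bot] at hf
    simp [hf]
  | succ m ih =>
    set g := ∑ j ∈ Finset.range (m + 1), ((Δ ^ j) f).eval 0 • binomPoly j
    have hΔ : Δ g = Δ f := by
      have hΔ₁ : Δ 1 = 0 := by simp [Δ_apply]
      conv_rhs => rw [ih (Δ_mem_degreeLT hf)]
      rw [map_sum, Finset.sum_range_succ', binomPoly_zero, map_smul, hΔ₁, smul_zero, add_zero]
      refine Finset.sum_congr rfl fun j _ => ?_
      rw [map_smul, Δ_binomPoly_succ, pow_succ, Module.End.mul_apply]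
    have h₀ : g.eval 0 = f.eval 0 := by
      simp [g, eval_finsetSum, Finset.sum_range_succ', eval_zero_binomPoly_succ, binomPoly_zero]
    rw [← sub_eq_zero]
    exact eq_zero_of_Δ_eq_zero_of_eval_zero (by rw [map_sub, hΔ, sub_self])
      (by rw [eval_sub, h₀, sub_self])

theorem map_mem_intValued_of_commute_taylor {L : Module.End ℝ ℝ[X]}
    (hL : ∀ m : ℤ, Commute L (taylor (m : ℝ))) {n : ℕ} (hγ : L (gam n) ∈ intValued)
    {f : ℝ[X]} (hf : f ∈ intValued) (hdeg : f ∈ degreeLT ℝ (n + 1)) :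
    L f ∈ intValued := by
  have hΔ : Commute L Δ := by
    have h₁ : Commute L (taylor 1) := by simpa using hL 1
    exact h₁.sub_right (Commute.one_right L)
  have hbinom : ∀ j ≤ n, L (binomPoly j) ∈ intValued := fun j hj => by
    have hshift := LinearMap.congr_fun (hL (-n)).eq ((Δ ^ (n - j)) (gam n))
    have hdiff := LinearMap.congr_fun (hΔ.pow_right (n - j)).eq (gam n)
    simp only [Module.End.mul_apply, Int.cast_neg, Int.cast_natCast] at hshift hdiff
    rw [binomPoly_eq_taylor_Δ_pow_gam hj, hshift, hdiff]
    exact_mod_cast taylor_mem_intValued (Δ_pow_mem_intValued hγ _) (-n)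
  rw [eq_sum_eval_Δ_pow_smul_binomPoly hdeg, map_sum]
  refine intValued.sum_mem fun j hj => ?_
  obtain ⟨z, hz⟩ := Δ_pow_mem_intValued hf j 0
  rw [map_smul, ← Int.cast_zero, hz]
  exact intCast_smul_mem_intValued (hbinom j (Finset.mem_range_succ_iff.mp hj)) z

theorem isNilpotent_Dop (n : ℕ) : IsNilpotent (Dop n) := by
  refine ⟨n + 1, ?_⟩
  rw [Dop, Module.End.pow_restrict]
  ext f : 2
  rw [LinearMap.coe_restrict_apply, Module.End.coe_pow]
  exact iterate_derivative_eq_zero_of_degree_lt (mem_degreeLT.mp f.2)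

/-- Let `k = ⌊(n+1)/2⌋` and `a₁, …, a_k ∈ ℝ`. If `φ = exp(a₁·D + a₂·D³ + ⋯ + a_k·D^{2k-1})`
maps the single polynomial `γ_n(t) = (t+1)(t+2)⋯(t+n)/n!` to an integer-valued
polynomial, then `φ` maps the whole lattice `M_n` bijectively onto itself.
(`γ_n` corresponds to the class of the structure sheaf `O` in `K₀(ℙ_n)`.) -/
theorem mapsTo_lattice_of_image_gamma_integral (n : ℕ) (a : Fin ((n + 1) / 2) → ℝ)
    (g : V n) (hg : (g : ℝ[X]) = gam n)
    (h : (expE n (∑ i : Fin ((n + 1) / 2), a i • (Dop n) ^ (2 * (i : ℕ) + 1))) g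
      ∈ MsetV n) :
    Set.BijOn
      (⇑(expE n (∑ i : Fin ((n + 1) / 2), a i • (Dop n) ^ (2 * (i : ℕ) + 1))))
      (MsetV n) (MsetV n) := by
  set q : ℝ[X] := ∑ i : Fin ((n + 1) / 2), a i • X ^ (2 * (i : ℕ) + 1)
  set P : ℝ[X] := ∑ j ∈ Finset.range (n + 1), ((j.factorial : ℝ))⁻¹ • q ^ j
  have hΦ : expE n (∑ i : Fin ((n + 1) / 2), a i • (Dop n) ^ (2 * (i : ℕ) + 1)) =
      aeval (Dop n) P := by
    simp [expE, P, q, map_sum, map_smul, map_pow]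
  have hP : (P - 1).coeff 0 = 0 := by
    simp [P, q, coeff_zero_eq_eval_zero, eval_finsetSum, Finset.sum_range_succ']
  have hcoe (f : V n) : (aeval (Dop n) P f : ℝ[X]) = aeval derivative P f :=
    LinearMap.coe_aeval_restrict_apply _ P f
  rw [hΦ] at h ⊢
  refine Module.End.bijOn_of_isNilpotent_sub_one
    (S := intValued.comap (V n).subtype.toAddMonoidHom) ?_ fun f hf => ?_
  · simpa using (isNilpotent_Dop n).aeval_of_coeff_zero_eq_zero hP
  · change (aeval (Dop n) P f : ℝ[X]) ∈ intValued
    rw [hcoe]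
    refine map_mem_intValued_of_commute_taylor
      (fun m => (commute_derivative_taylor _).aeval_left P) ?_ hf f.2
    rwa [← hg, ← hcoe]
end

section
/- Let n ≥ 3 be odd and a ∈ ℝ. The operator exp(a·D^n) = id + a·D^n maps the lattice M_n into itself if and only if a ∈ ℤ. Moreover, for a ∈ ℤ it is an isometry of χ_n, and it acts by f ↦ f + a·n!·c_n(f), where c_n(f) denotes the coefficient of t^n in f (so that n!·c_n(f) is the rank of the corresponding class in K_0(P_n)). -/
open Polynomial

/-- The constant polynomial `1 = γ_0` as an element of `V n`. -/
noncomputable def oneV (n : ℕ) : V n :=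
  ⟨1, Polynomial.mem_degreeLT.mpr
    (lt_of_le_of_lt Polynomial.degree_one_le (by exact_mod_cast Nat.succ_pos n))⟩

open Finset


lemma prod_consec (d n : ℕ) : ∏ k ∈ Finset.range n, (d + 1 + k) = n.factorial * (n + d).choose n := by
  induction n with
  | zero => simp
  | succ n ih =>
    rw [Finset.prod_range_succ, ih]
    have h1 := Nat.add_choose_mul_factorial_mul_factorial d n
    have h2 := Nat.add_choose_mul_factorial_mul_factorial d (n+1)
    have hd : 0 < d.factorial := Nat.factorial_pos d
    have h3 : (d + (n + 1)).factorial = (d + n + 1) * (d + n).factorial := by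
      rw [← Nat.add_assoc, Nat.factorial_succ]
    apply Nat.eq_of_mul_eq_mul_right hd
    calc n.factorial * ((n+d).choose n) * (d+1+n) * d.factorial
        = ((d+n).choose n * d.factorial * n.factorial) * (d+1+n) := by
          rw [Nat.add_comm n d]; ring
      _ = (d+n).factorial * (d+1+n) := by rw [h1]
      _ = (d+(n+1)).factorial := by rw [h3]; ring
      _ = (d+(n+1)).choose (n+1) * d.factorial * (n+1).factorial := h2.symm
      _ = (n+1).factorial * ((n+1+d).choose (n+1)) * d.factorial := by
          rw [Nat.add_comm (n+1) d]; ring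


lemma findiff (n : ℕ) : ∀ p : ℝ[X], p.degree < (n + 1 : ℕ) →
    ∑ k ∈ Finset.range (n+1), (-1:ℝ)^k * (n.choose k) * p.eval (k : ℝ)
      = (-1)^n * n.factorial * p.coeff n := by
  induction n with
  | zero =>
    intro p hp
    have h0 : p.degree ≤ 0 := Nat.WithBot.lt_one_iff_le_zero.mp (by exact_mod_cast hp)
    rw [Polynomial.eq_C_of_degree_le_zero h0]
    simp
  | succ n ih =>
    intro p hp
    set q : ℝ[X] := p.comp (X + C 1) - p with hq
    have hqe : ∀ x : ℝ, q.eval x = p.eval (x+1) - p.eval x := by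
      intro x; simp [hq, eval_comp]
    have hqc : ∀ m : ℕ, q.coeff m = (Polynomial.hasseDeriv m p).eval 1 - p.coeff m := by
      intro m
      have ht : p.comp (X + C 1) = Polynomial.taylor 1 p := by
        simp [Polynomial.taylor_apply]
      rw [hq, Polynomial.coeff_sub, ht, Polynomial.taylor_coeff]
    have hpc : ∀ m, n + 1 < m → p.coeff m = 0 := by
      intro m hm
      exact Polynomial.coeff_eq_zero_of_degree_lt (lt_of_lt_of_le hp (by exact_mod_cast hm))
    have hqtop : ∀ m, n + 1 ≤ m → q.coeff m = 0 := by
      intro m hm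
      rw [hqc]
      have hhd : Polynomial.hasseDeriv m p = C (p.coeff m) := by
        ext j
        rw [Polynomial.hasseDeriv_coeff, Polynomial.coeff_C]
        rcases Nat.eq_zero_or_pos j with hj | hj
        · subst hj; simp
        · rw [if_neg (Nat.pos_iff_ne_zero.mp hj)]
          rw [hpc (j + m) (by omega)]
          simp
      rw [hhd, eval_C]
      rcases eq_or_lt_of_le hm with hm' | hm'
      · rw [← hm']; simp
      · rw [hpc m hm']; ring
    have hqdeg : q.degree < ((n : ℕ) + 1 : ℕ) := by
      rw [Polynomial.degree_lt_iff_coeff_zero]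
      intro m hm
      exact hqtop m (by exact_mod_cast hm)
    have hqn : q.coeff n = (n+1 : ℝ) * p.coeff (n+1) := by
      rw [hqc]
      have hhd : Polynomial.hasseDeriv n p = C (p.coeff n) + C ((n+1 : ℝ) * p.coeff (n+1)) * X := by
        ext j
        rw [Polynomial.hasseDeriv_coeff]
        match j with
        | 0 => simp
        | 1 =>
          simp only [Polynomial.coeff_add, Polynomial.coeff_C, Polynomial.coeff_C_mul,
            Polynomial.coeff_X_one, if_neg one_ne_zero, mul_one, zero_add]
          rw [Nat.add_comm 1 n, Nat.choose_succ_self_right]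
          push_cast; ring
        | (j+2) =>
          rw [hpc (j + 2 + n) (by omega)]
          simp [Polynomial.coeff_C, Polynomial.coeff_X, Polynomial.coeff_one]
      rw [hhd]
      simp
    have hq' := ih q hqdeg
    rw [hqn] at hq'
    have hT : ∑ k ∈ range (n+1), (-1:ℝ)^(k+1) * (n.choose (k+1)) * p.eval ((k:ℝ)+1)
        = (∑ k ∈ range (n+1), (-1:ℝ)^k * (n.choose k) * p.eval (k:ℝ)) - p.eval 0 := by
      have h1 := Finset.sum_range_succ' (fun k => (-1:ℝ)^k * (n.choose k) * p.eval (k:ℝ)) (n+1)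
      rw [Finset.sum_range_succ _ (n+1)] at h1
      simp only [Nat.choose_succ_self, Nat.cast_zero, pow_zero, Nat.choose_zero_right,
        Nat.cast_one, mul_zero, zero_mul, mul_one, one_mul, add_zero] at h1
      push_cast at h1 ⊢
      linarith [h1]
    calc ∑ k ∈ Finset.range (n+1+1), (-1:ℝ)^k * ((n+1).choose k) * p.eval (k : ℝ)
        = ∑ k ∈ range (n+1), ((-1:ℝ)^(k+1) * (n.choose k) * p.eval ((k:ℝ)+1)
            + (-1:ℝ)^(k+1) * (n.choose (k+1)) * p.eval ((k:ℝ)+1)) + p.eval 0 := by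
          rw [Finset.sum_range_succ' _ (n+1)]
          congr 1
          · apply Finset.sum_congr rfl; intro k _
            rw [Nat.choose_succ_succ]
            push_cast; ring
          · simp
      _ = ∑ k ∈ range (n+1), (-1:ℝ)^(k+1) * (n.choose k) * p.eval ((k:ℝ)+1)
            + (∑ k ∈ range (n+1), (-1:ℝ)^(k+1) * (n.choose (k+1)) * p.eval ((k:ℝ)+1)) + p.eval 0 := by
          rw [Finset.sum_add_distrib]
      _ = ∑ k ∈ range (n+1), (-1:ℝ)^(k+1) * (n.choose k) * p.eval ((k:ℝ)+1)
            + ∑ k ∈ range (n+1), (-1:ℝ)^k * (n.choose k) * p.eval (k:ℝ) := by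
          rw [hT]; ring
      _ = -(∑ k ∈ range (n+1), (-1:ℝ)^k * (n.choose k) * q.eval (k:ℝ)) := by
          rw [← Finset.sum_add_distrib, ← Finset.sum_neg_distrib]
          apply Finset.sum_congr rfl; intro k _
          rw [hqe]
          ring
      _ = (-1)^(n+1) * (n+1).factorial * p.coeff (n+1) := by
          rw [hq', Nat.factorial_succ]
          push_cast; ring



lemma hasse_top (p : ℝ[X]) (m : ℕ) (h : p.degree < ((m : ℕ) + 1 : ℕ)) :
    Polynomial.hasseDeriv m p = Polynomial.C (p.coeff m) := by
  ext j
  rw [Polynomial.hasseDeriv_coeff, Polynomial.coeff_C]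
  match j with
  | 0 => simp
  | (j+1) =>
    rw [Polynomial.coeff_eq_zero_of_degree_lt (lt_of_lt_of_le h (by exact_mod_cast by omega))]
    simp

lemma gam_natDegree_le (n : ℕ) : (gam n).natDegree ≤ n := by
  refine le_trans (Polynomial.natDegree_mul_le) ?_
  simp only [Polynomial.natDegree_C, zero_add]
  refine le_trans (Polynomial.natDegree_prod_le _ _) ?_
  apply le_trans (Finset.sum_le_sum fun i _ => le_of_eq (Polynomial.natDegree_X_add_C _))
  simp

lemma comp_mem (n : ℕ) (c : ℝ) : (gam n).comp (Polynomial.X + Polynomial.C c) ∈ V n := by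
  rw [V, Polynomial.mem_degreeLT]
  have h1 : ((gam n).comp (Polynomial.X + Polynomial.C c)).natDegree ≤ n := by
    rw [Polynomial.natDegree_comp, Polynomial.natDegree_X_add_C]
    simpa using gam_natDegree_le n
  exact lt_of_le_of_lt (Polynomial.degree_le_natDegree) (by exact_mod_cast Nat.lt_succ_of_le h1)

lemma gam_degree_lt (n : ℕ) : (gam n).degree < ((n : ℕ) + 1 : ℕ) :=
  lt_of_le_of_lt (Polynomial.degree_le_natDegree)
    (by exact_mod_cast Nat.lt_succ_of_le (gam_natDegree_le n))

lemma gam_coeff (n : ℕ) : (gam n).coeff n = ((n.factorial : ℝ))⁻¹ := by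
  rw [gam, Polynomial.coeff_C_mul]
  have hm : (∏ i ∈ Finset.range n, (Polynomial.X + Polynomial.C ((i : ℝ) + 1))).Monic :=
    Polynomial.monic_prod_of_monic _ _ fun i _ => Polynomial.monic_X_add_C _
  have hd : (∏ i ∈ Finset.range n, (Polynomial.X + Polynomial.C ((i : ℝ) + 1))).natDegree = n := by
    rw [Polynomial.natDegree_prod _ _ fun i _ => (Polynomial.monic_X_add_C _).ne_zero]
    simp only [Polynomial.natDegree_X_add_C]
    simp
  have hc := hm.coeff_natDegree
  rw [hd] at hc
  rw [hc, mul_one]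

lemma comp_coeff (n : ℕ) (c : ℝ) :
    ((gam n).comp (Polynomial.X + Polynomial.C c)).coeff n = ((n.factorial : ℝ))⁻¹ := by
  rw [← Polynomial.taylor_apply, Polynomial.taylor_coeff, hasse_top _ _ (gam_degree_lt n),
    Polynomial.eval_C, gam_coeff]

lemma gam_eval (m : ℕ) (x : ℝ) :
    (gam m).eval x = ((m.factorial : ℝ))⁻¹ * ∏ k ∈ Finset.range m, (x + ((k : ℝ) + 1)) := by
  simp [gam, Polynomial.eval_prod]

lemma comp_eval (n : ℕ) (c x : ℝ) :
    ((gam n).comp (Polynomial.X + Polynomial.C c)).eval x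
      = ((n.factorial : ℝ))⁻¹ * ∏ k ∈ Finset.range n, (x + c + ((k : ℝ) + 1)) := by
  rw [Polynomial.eval_comp]
  simp [gam_eval]

lemma evalB (n i j : ℕ) (hin : i ≤ n) :
    ∏ k ∈ Finset.range n, ((j:ℝ) - (i:ℝ) + ((k:ℝ)+1)) =
      (n.factorial : ℝ) * (((n + j - i).choose n : ℕ) : ℝ) := by
  rcases le_or_gt i j with hij | hij
  · have key := prod_consec (j - i) n
    have : ((∏ k ∈ Finset.range n, ((j - i) + 1 + k) : ℕ) : ℝ)
        = ∏ k ∈ Finset.range n, ((j:ℝ) - (i:ℝ) + ((k:ℝ)+1)) := by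
      push_cast [Nat.cast_sub hij]
      apply Finset.prod_congr rfl
      intro k _; ring
    rw [← this, key]
    have : n + (j - i) = n + j - i := by omega
    push_cast [this]
    ring
  · have h0 : (n + j - i).choose n = 0 := Nat.choose_eq_zero_of_lt (by omega)
    rw [h0]
    rw [Finset.prod_eq_zero (Finset.mem_range.mpr (show i - j - 1 < n by omega))]
    · ring
    · push_cast [Nat.cast_sub (show j + 1 ≤ i by omega), Nat.cast_sub (show 1 ≤ i - j by omega),
        Nat.cast_sub hij.le]
      ring

noncomputable def bV (n : ℕ) (i : Fin (n+1)) : V n :=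
  ⟨(gam n).comp (Polynomial.X + Polynomial.C ((i : ℕ) : ℝ)), comp_mem n _⟩

lemma bV_indep (n : ℕ) : LinearIndependent ℝ (bV n) := by
  rw [Fintype.linearIndependent_iff]
  intro g hg
  have hg' : ∑ i : Fin (n+1), g i • ((gam n).comp (Polynomial.X + Polynomial.C ((i : ℕ) : ℝ)))
      = (0 : ℝ[X]) := by
    have := congrArg Subtype.val hg
    simpa [bV] using this
  suffices H : ∀ M : ℕ, ∀ hM : M < n + 1, g ⟨M, hM⟩ = 0 by
    intro i; have := H i.1 i.2; simpa using this
  intro M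
  induction M using Nat.strong_induction_on with
  | _ M IH =>
    intro hM
    have hev := congrArg (Polynomial.eval (-((n:ℝ) + 1 + M))) hg'
    rw [Polynomial.eval_finset_sum] at hev
    simp only [Polynomial.eval_smul, Polynomial.eval_zero, smul_eq_mul] at hev
    rw [Finset.sum_eq_single (⟨M, hM⟩ : Fin (n+1))] at hev
    · -- g M * E M M = 0, diagonal nonzero
      have hdiag : ((gam n).comp (Polynomial.X + Polynomial.C ((M : ℕ) : ℝ))).eval
          (-((n:ℝ) + 1 + M)) = ((n.factorial : ℝ))⁻¹ * ∏ k ∈ Finset.range n, ((k:ℝ) - n) := by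
        rw [comp_eval]
        congr 1
        apply Finset.prod_congr rfl; intro k _; push_cast; ring
      rw [hdiag] at hev
      have hne : ((n.factorial : ℝ))⁻¹ * ∏ k ∈ Finset.range n, ((k:ℝ) - n) ≠ 0 := by
        apply mul_ne_zero (inv_ne_zero (by exact_mod_cast Nat.factorial_ne_zero n))
        rw [Finset.prod_ne_zero_iff]
        intro k hk
        have : (k : ℝ) < n := by exact_mod_cast Finset.mem_range.mp hk
        intro h; nlinarith
      exact (mul_eq_zero.mp hev).resolve_right hne
    · intro i _ hne
      rcases lt_or_gt_of_ne (fun h : (i:ℕ) = M => hne (Fin.ext h)) with hlt | hgt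
      · rw [IH i.1 hlt i.2]
        simp [Fin.eta]
      · -- i > M : evaluation vanishes
        have hz : ((gam n).comp (Polynomial.X + Polynomial.C ((i : ℕ) : ℝ))).eval
            (-((n:ℝ) + 1 + M)) = 0 := by
          rw [comp_eval]
          rw [Finset.prod_eq_zero (Finset.mem_range.mpr (show n + M - i < n by omega))]
          · ring
          · push_cast [Nat.cast_sub (show (i:ℕ) ≤ n + M by omega)]
            ring
        rw [hz, mul_zero]
    · intro h; exact absurd (Finset.mem_univ _) h

lemma exists_repr (n : ℕ) (f : V n) : ∃ c : Fin (n+1) → ℝ, ∑ i, c i • bV n i = f := by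
  have hcard : Fintype.card (Fin (n+1)) = Module.finrank ℝ (V n) := by
    rw [Fintype.card_fin]
    have := (Polynomial.degreeLTEquiv ℝ (n+1)).finrank_eq
    rw [show V n = Polynomial.degreeLT ℝ (n+1) from rfl, this]
    simp
  have hsp := (bV_indep n).span_eq_top_of_card_eq_finrank hcard
  have hf : f ∈ Submodule.span ℝ (Set.range (bV n)) := by rw [hsp]; trivial
  exact (Finsupp.mem_span_range_iff_exists_finsupp.mp hf).elim
    (fun c hc => ⟨c, by rw [← hc]; rw [Finsupp.sum_fintype]; simp⟩)

lemma Dop_pow_coe (n k : ℕ) (f : V n) :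
    (((Dop n ^ k) f : V n) : ℝ[X]) = Polynomial.derivative^[k] (f : ℝ[X]) := by
  induction k generalizing f with
  | zero => simp
  | succ k ih =>
    rw [pow_succ', Module.End.mul_apply, Function.iterate_succ_apply', ← ih]
    rfl

lemma iter_deriv (n : ℕ) (f : ℝ[X]) (hf : f.degree < ((n:ℕ) + 1 : ℕ)) :
    Polynomial.derivative^[n] f = Polynomial.C ((n.factorial : ℝ) * f.coeff n) := by
  ext m
  rw [Polynomial.coeff_iterate_derivative, Polynomial.coeff_C]
  match m with
  | 0 =>
    rw [if_pos rfl, Nat.zero_add, Nat.descFactorial_self]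
    simp [nsmul_eq_mul]
  | (m+1) =>
    rw [if_neg (Nat.succ_ne_zero m)]
    rw [Polynomial.coeff_eq_zero_of_degree_lt (lt_of_lt_of_le hf (by exact_mod_cast by omega))]
    simp

lemma apply_formula (n : ℕ) (a : ℝ) (f : V n) :
    ((1 : Module.End ℝ (V n)) + a • (Dop n) ^ n) f =
      f + (a * (n.factorial : ℝ) * ((f : ℝ[X]).coeff n)) • oneV n := by
  apply Subtype.ext
  have h1 : (((1 : Module.End ℝ (V n)) + a • (Dop n) ^ n) f : ℝ[X])
      = (f : ℝ[X]) + a • ((((Dop n) ^ n) f : V n) : ℝ[X]) := rfl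
  rw [h1, Dop_pow_coe, iter_deriv n _ (Polynomial.mem_degreeLT.mp f.2)]
  show _ = (f : ℝ[X]) + (a * (n.factorial : ℝ) * ((f : ℝ[X]).coeff n)) • (1 : ℝ[X])
  congr 1
  rw [Polynomial.smul_eq_C_mul, ← Polynomial.C_mul, Polynomial.smul_eq_C_mul, mul_one, mul_assoc]

lemma int_dvd (n : ℕ) (m : ℤ) : (n.factorial : ℤ) ∣ ∏ k ∈ Finset.range n, (m + k + 1) := by
  rcases le_or_gt 0 m with hm | hm
  · obtain ⟨d, rfl⟩ := Int.eq_ofNat_of_zero_le hm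
    have : ∏ k ∈ Finset.range n, ((d:ℤ) + k + 1) = ((∏ k ∈ Finset.range n, (d + 1 + k) : ℕ) : ℤ) := by
      push_cast
      apply Finset.prod_congr rfl; intro k _; ring
    rw [this, prod_consec]
    push_cast
    exact Dvd.intro _ rfl
  · rcases le_or_gt (-(n:ℤ)) m with hm2 | hm2
    · -- -n ≤ m ≤ -1 : a factor is zero
      rw [Finset.prod_eq_zero (Finset.mem_range.mpr (show (-m-1).toNat < n by omega))]
      · exact dvd_zero _
      · have : (((-m-1).toNat : ℤ)) = -m-1 := Int.toNat_of_nonneg (by omega)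
        rw [this]; ring
    · -- m < -n
      set d : ℕ := (-m - n - 1).toNat with hd
      have hmd : m = -((n:ℤ) + d + 1) := by
        have : ((d:ℤ)) = -m - n - 1 := Int.toNat_of_nonneg (by omega)
        omega
      have h1 : ∏ k ∈ Finset.range n, (m + k + 1) = (-1)^n * ∏ k ∈ Finset.range n, ((n:ℤ) + d - k) := by
        rw [show ∏ k ∈ Finset.range n, (m + (k:ℤ) + 1)
            = ∏ k ∈ Finset.range n, ((-1) * ((n:ℤ) + (d:ℤ) - (k:ℤ))) from
          Finset.prod_congr rfl fun k _ => by rw [hmd]; ring]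
        rw [Finset.prod_mul_distrib, Finset.prod_const, Finset.card_range]
      have h2 : ∏ k ∈ Finset.range n, ((n:ℤ) + d - k) = ((∏ k ∈ Finset.range n, (n + d - k) : ℕ) : ℤ) := by
        push_cast
        apply Finset.prod_congr rfl; intro k hk
        have hk' := Finset.mem_range.mp hk
        rw [Nat.cast_sub (by omega : k ≤ n + d)]
        push_cast; ring
      have h3 : ∏ k ∈ Finset.range n, (n + d - k) = ∏ k ∈ Finset.range n, (d + 1 + k) := by
        rw [← Finset.prod_range_reflect]
        apply Finset.prod_congr rfl; intro k hk
        have := Finset.mem_range.mp hk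
        omega
      rw [h1, h2, h3, prod_consec]
      push_cast
      exact Dvd.dvd.mul_left (Dvd.intro _ rfl) _

lemma bV0_eval_int (n : ℕ) (m : ℤ) :
    ∃ z : ℤ, ((bV n 0 : V n) : ℝ[X]).eval ((m:ℤ) : ℝ) = (z : ℝ) := by
  obtain ⟨w, hw⟩ := int_dvd n m
  refine ⟨w, ?_⟩
  show ((gam n).comp (Polynomial.X + Polynomial.C ((0:ℕ) : ℝ))).eval ((m:ℤ) : ℝ) = (w : ℝ)
  rw [comp_eval]
  have hprod : ∏ k ∈ Finset.range n, (((m:ℤ):ℝ) + (0:ℕ) + ((k:ℝ) + 1))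
      = ((∏ k ∈ Finset.range n, (m + k + 1) : ℤ) : ℝ) := by
    push_cast
    apply Finset.prod_congr rfl; intro k _; ring
  rw [hprod, hw]
  push_cast
  field_simp

lemma coeff_int (n : ℕ) (f : V n) (hf : f ∈ MsetV n) :
    ∃ w : ℤ, (n.factorial : ℝ) * ((f : ℝ[X]).coeff n) = (w : ℝ) := by
  choose z hz using hf
  have hfd := findiff n (f : ℝ[X]) (Polynomial.mem_degreeLT.mp f.2)
  refine ⟨(-1)^n * ∑ k ∈ Finset.range (n+1), (-1)^k * (n.choose k) * z k, ?_⟩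
  have hsum : ∑ k ∈ Finset.range (n+1), (-1:ℝ)^k * (n.choose k) * ((f : ℝ[X]).eval (k:ℝ))
      = ∑ k ∈ Finset.range (n+1), (-1:ℝ)^k * (n.choose k) * ((z k : ℤ) : ℝ) := by
    apply Finset.sum_congr rfl; intro k _
    congr 1
    have := hz (k : ℤ)
    rw [show (((k:ℤ)):ℝ) = (k:ℝ) by push_cast; ring] at this
    exact this
  rw [hsum] at hfd
  have := congrArg (fun x => ((-1:ℝ))^n * x) hfd
  rw [← mul_assoc, ← mul_assoc, ← pow_add] at this
  rw [show ((-1:ℝ))^(n+n) = 1 by rw [pow_add]; rcases neg_one_pow_eq_or ℝ n with h | h <;> rw [h] <;> ring,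
    one_mul] at this
  rw [← this]
  push_cast
  ring

lemma lin_degree_lt (n : ℕ) (q : ℕ → ℝ[X]) (hq : ∀ k, (q k).natDegree ≤ 1) (c : ℝ) :
    (Polynomial.C c * ∏ k ∈ Finset.range n, q k).degree < ((n:ℕ) + 1 : ℕ) := by
  have h1 : (Polynomial.C c * ∏ k ∈ Finset.range n, q k).natDegree ≤ n := by
    refine le_trans (Polynomial.natDegree_mul_le) ?_
    simp only [Polynomial.natDegree_C, zero_add]
    refine le_trans (Polynomial.natDegree_prod_le _ _) ?_
    refine le_trans (Finset.sum_le_sum fun k _ => hq k) ?_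
    simp
  exact lt_of_le_of_lt (Polynomial.degree_le_natDegree) (by exact_mod_cast Nat.lt_succ_of_le h1)

lemma lin_coeff (n : ℕ) (q : ℕ → ℝ[X]) (hq : ∀ k, (q k).natDegree ≤ 1) (c : ℝ) :
    (Polynomial.C c * ∏ k ∈ Finset.range n, q k).coeff n
      = c * ∏ k ∈ Finset.range n, (q k).coeff 1 := by
  rw [Polynomial.coeff_C_mul]
  congr 1
  have := Polynomial.coeff_prod_of_natDegree_le q 1 (fun k _ => hq k) (s := Finset.range n)
  simpa using this

-- expansion of the constant polynomial 1 in the shifted-gamma basis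
lemma oneV_eq (n : ℕ) :
    oneV n = ∑ j : Fin (n+1), ((-1:ℝ)^n * (-1)^(j:ℕ) * (n.choose (j:ℕ))) • bV n j := by
  apply Subtype.ext
  have hcoe : ((∑ j : Fin (n+1), ((-1:ℝ)^n * (-1)^(j:ℕ) * (n.choose (j:ℕ))) • bV n j : V n) : ℝ[X])
      = ∑ j : Fin (n+1), ((-1:ℝ)^n * (-1)^(j:ℕ) * (n.choose (j:ℕ))) •
          ((gam n).comp (Polynomial.X + Polynomial.C ((j:ℕ) : ℝ))) := by
    simp [bV]
  rw [hcoe]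
  show (1 : ℝ[X]) = _
  apply Polynomial.funext
  intro x
  have hp := findiff n ((gam n).comp (Polynomial.X + Polynomial.C x))
    (Polynomial.mem_degreeLT.mp (comp_mem n x))
  rw [comp_coeff] at hp
  have heval : ∀ j : ℕ, ((gam n).comp (Polynomial.X + Polynomial.C x)).eval (j : ℝ)
      = ((gam n).comp (Polynomial.X + Polynomial.C ((j:ℕ) : ℝ))).eval x := by
    intro j
    rw [comp_eval, comp_eval]
    congr 1
    apply Finset.prod_congr rfl; intro k _; ring
  rw [Polynomial.eval_one, Polynomial.eval_finset_sum]
  simp only [Polynomial.eval_smul, smul_eq_mul]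
  rw [Fin.sum_univ_eq_sum_range (fun j => ((-1:ℝ)^n * (-1)^j * (n.choose j)) *
    ((gam n).comp (Polynomial.X + Polynomial.C ((j:ℕ) : ℝ))).eval x)]
  have : ∑ j ∈ Finset.range (n+1), ((-1:ℝ)^n * (-1)^j * (n.choose j)) *
      ((gam n).comp (Polynomial.X + Polynomial.C ((j:ℕ) : ℝ))).eval x
      = (-1:ℝ)^n * ∑ j ∈ Finset.range (n+1), (-1:ℝ)^j * (n.choose j) *
        ((gam n).comp (Polynomial.X + Polynomial.C x)).eval (j : ℝ) := by
    rw [Finset.mul_sum]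
    apply Finset.sum_congr rfl; intro j _
    rw [heval]; ring
  rw [this, hp]
  have h3 : ((-1:ℝ))^n * (-1)^n = 1 := by
    rcases neg_one_pow_eq_or ℝ n with h | h <;> rw [h] <;> ring
  have h2 : ((-1:ℝ))^n * ((-1)^n * (n.factorial:ℝ) * ((n.factorial:ℝ))⁻¹) = 1 := by
    rw [mul_assoc ((-1:ℝ)^n) (n.factorial:ℝ) _,
      mul_inv_cancel₀ (by exact_mod_cast Nat.factorial_ne_zero n), mul_one, h3]
  rw [h2]

lemma coeff1_X_add_C (c : ℝ) : (Polynomial.X + Polynomial.C c).coeff 1 = 1 := by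
  simp [Polynomial.coeff_add, Polynomial.coeff_C]

lemma coeff1_C_sub_X (c : ℝ) : (Polynomial.C c - Polynomial.X).coeff 1 = -1 := by
  simp [Polynomial.coeff_sub, Polynomial.coeff_C]

lemma neg_one_sq_pow (n : ℕ) : ((-1:ℝ))^n * (-1)^n = 1 := by
  rcases neg_one_pow_eq_or ℝ n with h | h <;> rw [h] <;> ring

lemma numsum1 (n i : ℕ) (hi : i ≤ n) :
    ∑ j ∈ Finset.range (n+1), (-1:ℝ)^j * (n.choose j) * (((n + j - i).choose n : ℕ) : ℝ)
      = (-1:ℝ)^n := by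
  set p : ℝ[X] := Polynomial.C ((n.factorial:ℝ))⁻¹ *
    ∏ k ∈ Finset.range n, (Polynomial.X + Polynomial.C ((k:ℝ) + 1 - (i:ℝ))) with hp
  have hq : ∀ k : ℕ, (Polynomial.X + Polynomial.C ((k:ℝ) + 1 - (i:ℝ))).natDegree ≤ 1 :=
    fun k => le_of_eq (Polynomial.natDegree_X_add_C _)
  have hdeg := lin_degree_lt n _ hq ((n.factorial:ℝ))⁻¹
  have hco := lin_coeff n _ hq ((n.factorial:ℝ))⁻¹
  have hev : ∀ j : ℕ, p.eval (j:ℝ) = (((n + j - i).choose n : ℕ) : ℝ) := by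
    intro j
    rw [hp, Polynomial.eval_mul, Polynomial.eval_C, Polynomial.eval_prod]
    have : ∏ k ∈ Finset.range n, Polynomial.eval (j:ℝ)
        (Polynomial.X + Polynomial.C ((k:ℝ) + 1 - (i:ℝ)))
        = ∏ k ∈ Finset.range n, ((j:ℝ) - (i:ℝ) + ((k:ℝ)+1)) := by
      apply Finset.prod_congr rfl; intro k _; simp; ring
    rw [this, evalB n i j hi, ← mul_assoc,
      inv_mul_cancel₀ (by exact_mod_cast Nat.factorial_ne_zero n), one_mul]
  have hfd := findiff n p hdeg
  rw [hco] at hfd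
  have hone : ∏ k ∈ Finset.range n, (Polynomial.X + Polynomial.C ((k:ℝ) + 1 - (i:ℝ))).coeff 1
      = 1 := by
    rw [Finset.prod_congr rfl (fun (k:ℕ) _ => coeff1_X_add_C ((k:ℝ) + 1 - (i:ℝ)))]
    exact Finset.prod_const_one
  rw [hone, mul_one] at hfd
  rw [Finset.sum_congr rfl (fun (j:ℕ) _ => by rw [← hev j])]
  rw [hfd, mul_assoc, mul_inv_cancel₀ (by exact_mod_cast Nat.factorial_ne_zero n), mul_one]

lemma numsum2 (n j : ℕ) (hj : j ≤ n) :
    ∑ i ∈ Finset.range (n+1), (-1:ℝ)^i * (n.choose i) * (((n + j - i).choose n : ℕ) : ℝ)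
      = 1 := by
  set p : ℝ[X] := Polynomial.C ((n.factorial:ℝ))⁻¹ *
    ∏ k ∈ Finset.range n, (Polynomial.C ((j:ℝ) + (k:ℝ) + 1) - Polynomial.X) with hp
  have hq : ∀ k : ℕ, (Polynomial.C ((j:ℝ) + (k:ℝ) + 1) - Polynomial.X).natDegree ≤ 1 := by
    intro k
    refine le_trans (Polynomial.natDegree_sub_le _ _) ?_
    rw [Polynomial.natDegree_C, Polynomial.natDegree_X]
    omega
  have hdeg := lin_degree_lt n _ hq ((n.factorial:ℝ))⁻¹
  have hco := lin_coeff n _ hq ((n.factorial:ℝ))⁻¹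
  have hev : ∀ i : ℕ, i ≤ n → p.eval (i:ℝ) = (((n + j - i).choose n : ℕ) : ℝ) := by
    intro i hi
    rw [hp, Polynomial.eval_mul, Polynomial.eval_C, Polynomial.eval_prod]
    have : ∏ k ∈ Finset.range n, Polynomial.eval (i:ℝ)
        (Polynomial.C ((j:ℝ) + (k:ℝ) + 1) - Polynomial.X)
        = ∏ k ∈ Finset.range n, ((j:ℝ) - (i:ℝ) + ((k:ℝ)+1)) := by
      apply Finset.prod_congr rfl; intro k _; simp; ring
    rw [this, evalB n i j hi, ← mul_assoc,
      inv_mul_cancel₀ (by exact_mod_cast Nat.factorial_ne_zero n), one_mul]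
  have hfd := findiff n p hdeg
  rw [hco] at hfd
  have hone : ∏ k ∈ Finset.range n, (Polynomial.C ((j:ℝ) + (k:ℝ) + 1) - Polynomial.X).coeff 1
      = (-1:ℝ)^n := by
    rw [Finset.prod_congr rfl (fun (k:ℕ) _ => coeff1_C_sub_X ((j:ℝ) + (k:ℝ) + 1))]
    rw [Finset.prod_const, Finset.card_range]
  rw [hone] at hfd
  rw [Finset.sum_congr rfl (fun (i:ℕ) hi => by
    rw [← hev i (Nat.lt_succ_iff.mp (Finset.mem_range.mp hi))])]
  rw [hfd]
  rw [show (-1:ℝ)^n * (n.factorial:ℝ) * ((n.factorial:ℝ)⁻¹ * (-1)^n)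
      = ((-1:ℝ)^n * (-1)^n) * ((n.factorial:ℝ) * (n.factorial:ℝ)⁻¹) from by ring,
    neg_one_sq_pow, mul_inv_cancel₀ (by exact_mod_cast Nat.factorial_ne_zero n), one_mul]

lemma numsum0 (n : ℕ) (hn : 1 ≤ n) :
    ∑ j ∈ Finset.range (n+1), (-1:ℝ)^j * (n.choose j) = 0 := by
  have hdeg : (1 : ℝ[X]).degree < ((n:ℕ) + 1 : ℕ) :=
    lt_of_le_of_lt Polynomial.degree_one_le (by exact_mod_cast Nat.succ_pos n)
  have hfd := findiff n 1 hdeg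
  simp only [Polynomial.eval_one, mul_one, Polynomial.coeff_one] at hfd
  rw [if_neg (by omega : ¬ n = 0), mul_zero] at hfd
  exact hfd

lemma chi_bb (n : ℕ) (χ : ↥(V n) →ₗ[ℝ] ↥(V n) →ₗ[ℝ] ℝ) (hχ : EulerCond n χ) (i j : Fin (n+1)) :
    χ (bV n i) (bV n j) = (((n + (j:ℕ) - (i:ℕ)).choose n : ℕ) : ℝ) :=
  hχ i j (bV n i) (bV n j) rfl rfl

lemma chi_b_one (n : ℕ) (χ : ↥(V n) →ₗ[ℝ] ↥(V n) →ₗ[ℝ] ℝ) (hχ : EulerCond n χ) (i : Fin (n+1)) :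
    χ (bV n i) (oneV n) = 1 := by
  rw [oneV_eq n, map_sum]
  simp only [map_smul, smul_eq_mul]
  have : ∀ j : Fin (n+1), χ (bV n i) (bV n j) = (((n + (j:ℕ) - (i:ℕ)).choose n : ℕ) : ℝ) :=
    chi_bb n χ hχ i
  rw [Finset.sum_congr rfl (fun j _ => by rw [this j])]
  rw [Fin.sum_univ_eq_sum_range (fun j => ((-1:ℝ)^n * (-1)^j * (n.choose j)) *
    (((n + j - (i:ℕ)).choose n : ℕ) : ℝ))]
  have : ∑ j ∈ Finset.range (n+1), ((-1:ℝ)^n * (-1)^j * (n.choose j)) *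
      (((n + j - (i:ℕ)).choose n : ℕ) : ℝ)
      = (-1:ℝ)^n * ∑ j ∈ Finset.range (n+1), (-1:ℝ)^j * (n.choose j) *
        (((n + j - (i:ℕ)).choose n : ℕ) : ℝ) := by
    rw [Finset.mul_sum]
    apply Finset.sum_congr rfl; intro j _; ring
  rw [this, numsum1 n (i:ℕ) (Nat.lt_succ_iff.mp i.isLt), neg_one_sq_pow]

lemma chi_one_b (n : ℕ) (χ : ↥(V n) →ₗ[ℝ] ↥(V n) →ₗ[ℝ] ℝ) (hχ : EulerCond n χ) (j : Fin (n+1)) :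
    χ (oneV n) (bV n j) = (-1:ℝ)^n := by
  rw [oneV_eq n, map_sum]
  simp only [LinearMap.sum_apply, map_smul, LinearMap.smul_apply, smul_eq_mul]
  rw [Finset.sum_congr rfl (fun i _ => by rw [chi_bb n χ hχ i j])]
  rw [Fin.sum_univ_eq_sum_range (fun i => ((-1:ℝ)^n * (-1)^i * (n.choose i)) *
    (((n + (j:ℕ) - i).choose n : ℕ) : ℝ))]
  have : ∑ i ∈ Finset.range (n+1), ((-1:ℝ)^n * (-1)^i * (n.choose i)) *
      (((n + (j:ℕ) - i).choose n : ℕ) : ℝ)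
      = (-1:ℝ)^n * ∑ i ∈ Finset.range (n+1), (-1:ℝ)^i * (n.choose i) *
        (((n + (j:ℕ) - i).choose n : ℕ) : ℝ) := by
    rw [Finset.mul_sum]
    apply Finset.sum_congr rfl; intro i _; ring
  rw [this, numsum2 n (j:ℕ) (Nat.lt_succ_iff.mp j.isLt), mul_one]

lemma chi_one_one (n : ℕ) (hn : 1 ≤ n) (χ : ↥(V n) →ₗ[ℝ] ↥(V n) →ₗ[ℝ] ℝ)
    (hχ : EulerCond n χ) : χ (oneV n) (oneV n) = 0 := by
  nth_rewrite 2 [oneV_eq n]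
  rw [map_sum]
  simp only [map_smul, smul_eq_mul]
  rw [Finset.sum_congr rfl (fun j _ => by rw [chi_one_b n χ hχ j])]
  rw [Fin.sum_univ_eq_sum_range (fun j => ((-1:ℝ)^n * (-1)^j * (n.choose j)) * (-1:ℝ)^n)]
  have : ∑ j ∈ Finset.range (n+1), ((-1:ℝ)^n * (-1)^j * (n.choose j)) * (-1:ℝ)^n
      = ((-1:ℝ)^n * (-1)^n) * ∑ j ∈ Finset.range (n+1), (-1:ℝ)^j * (n.choose j) := by
    rw [Finset.mul_sum]
    apply Finset.sum_congr rfl; intro j _; ring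
  rw [this, numsum0 n hn, mul_zero]

lemma coeff_of_repr (n : ℕ) (f : V n) (c : Fin (n+1) → ℝ) (hc : ∑ i, c i • bV n i = f) :
    (f : ℝ[X]).coeff n = (∑ i, c i) * ((n.factorial : ℝ))⁻¹ := by
  have hcoe : (f : ℝ[X]) = ∑ i : Fin (n+1), c i •
      ((gam n).comp (Polynomial.X + Polynomial.C ((i:ℕ) : ℝ))) := by
    rw [← hc]; simp [bV]
  rw [hcoe, Polynomial.finset_sum_coeff]
  rw [Finset.sum_congr rfl (fun (i : Fin (n+1)) _ => by
    rw [Polynomial.coeff_smul, comp_coeff n ((i:ℕ):ℝ), smul_eq_mul])]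
  rw [← Finset.sum_mul]

lemma chi_f_one (n : ℕ) (χ : ↥(V n) →ₗ[ℝ] ↥(V n) →ₗ[ℝ] ℝ) (hχ : EulerCond n χ)
    (f : V n) (c : Fin (n+1) → ℝ) (hc : ∑ i, c i • bV n i = f) :
    χ f (oneV n) = ∑ i, c i := by
  rw [← hc, map_sum]
  simp only [LinearMap.sum_apply, map_smul, LinearMap.smul_apply, smul_eq_mul]
  rw [Finset.sum_congr rfl (fun i _ => by rw [chi_b_one n χ hχ i, mul_one])]

lemma chi_one_g (n : ℕ) (χ : ↥(V n) →ₗ[ℝ] ↥(V n) →ₗ[ℝ] ℝ) (hχ : EulerCond n χ)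
    (g : V n) (d : Fin (n+1) → ℝ) (hd : ∑ j, d j • bV n j = g) :
    χ (oneV n) g = (-1:ℝ)^n * ∑ j, d j := by
  rw [← hd, map_sum]
  simp only [map_smul, smul_eq_mul]
  rw [Finset.sum_congr rfl (fun j _ => by rw [chi_one_b n χ hχ j])]
  rw [Finset.mul_sum]
  apply Finset.sum_congr rfl; intro j _; ring

/-- Let `n ≥ 3` be odd and `a ∈ ℝ`. The operator `exp(a·Dⁿ) = id + a·Dⁿ` maps the lattice
`M_n` into itself iff `a ∈ ℤ`; moreover for `a ∈ ℤ` it is an isometry of `χ_n` and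
acts by `f ↦ f + a·n!·c_n(f)`, where `c_n(f)` is the coefficient of `tⁿ` in `f`
(so `n!·c_n(f)` is the rank of the corresponding class in `K₀(ℙ_n)`). -/
theorem exp_top_odd_power (n : ℕ) (hn : 3 ≤ n) (hodd : Odd n) (a : ℝ) :
    (Set.MapsTo (⇑((1 : Module.End ℝ (V n)) + a • (Dop n) ^ n)) (MsetV n) (MsetV n) ↔
      ∃ z : ℤ, a = (z : ℝ)) ∧
    ((∃ z : ℤ, a = (z : ℝ)) →
      (∀ χ : ↥(V n) →ₗ[ℝ] ↥(V n) →ₗ[ℝ] ℝ, EulerCond n χ →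
        ∀ f g : V n,
          χ (((1 : Module.End ℝ (V n)) + a • (Dop n) ^ n) f)
            (((1 : Module.End ℝ (V n)) + a • (Dop n) ^ n) g) = χ f g) ∧
      (∀ f : V n, ((1 : Module.End ℝ (V n)) + a • (Dop n) ^ n) f =
        f + (a * (n.factorial : ℝ) * (f : ℝ[X]).coeff n) • oneV n)) := by
  have hfac : (n.factorial : ℝ) ≠ 0 := by exact_mod_cast Nat.factorial_ne_zero n
  refine ⟨⟨?_, ?_⟩, fun _ => ⟨?_, apply_formula n a⟩⟩
  · -- MapsTo → a ∈ ℤ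
    intro hMT
    have hmem : bV n 0 ∈ MsetV n := fun m => bV0_eval_int n m
    have himg := hMT hmem
    obtain ⟨z, hz⟩ := himg (-1)
    refine ⟨z, ?_⟩
    rw [apply_formula n a (bV n 0)] at hz
    have hcoe : ((bV n 0 + (a * (n.factorial : ℝ) * ((bV n 0 : ℝ[X]).coeff n)) • oneV n : V n) : ℝ[X])
        = ((bV n 0 : ℝ[X])) + Polynomial.C (a * (n.factorial : ℝ) * ((bV n 0 : ℝ[X]).coeff n)) := by
      show _ = _ + Polynomial.C _
      rw [Submodule.coe_add, SetLike.val_smul]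
      congr 1
      show _ • (1:ℝ[X]) = _
      rw [Polynomial.smul_eq_C_mul, mul_one]
    rw [hcoe] at hz
    have hcf : ((bV n 0 : V n) : ℝ[X]).coeff n = ((n.factorial : ℝ))⁻¹ := comp_coeff n _
    have hev0 : ((bV n 0 : V n) : ℝ[X]).eval (((-1 : ℤ)) : ℝ) = 0 := by
      show ((gam n).comp (Polynomial.X + Polynomial.C ((0:ℕ) : ℝ))).eval _ = 0
      rw [comp_eval]
      rw [Finset.prod_eq_zero (Finset.mem_range.mpr (show 0 < n by omega))]
      · ring
      · push_cast; ring
    rw [Polynomial.eval_add, hev0, Polynomial.eval_C, hcf, zero_add] at hz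
    rw [mul_assoc, mul_inv_cancel₀ hfac, mul_one] at hz
    exact hz
  · -- a ∈ ℤ → MapsTo
    rintro ⟨z, rfl⟩ f hf m
    obtain ⟨w, hw⟩ := coeff_int n f hf
    obtain ⟨u, hu⟩ := hf m
    rw [apply_formula]
    refine ⟨u + z * w, ?_⟩
    have hcoe : ((f + ((z:ℝ) * (n.factorial : ℝ) * ((f : ℝ[X]).coeff n)) • oneV n : V n) : ℝ[X])
        = (f : ℝ[X]) + Polynomial.C ((z:ℝ) * (n.factorial : ℝ) * ((f : ℝ[X]).coeff n)) := by
      rw [Submodule.coe_add, SetLike.val_smul]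
      congr 1
      show _ • (1:ℝ[X]) = _
      rw [Polynomial.smul_eq_C_mul, mul_one]
    rw [hcoe, Polynomial.eval_add, Polynomial.eval_C, hu, mul_assoc, hw]
    push_cast
    ring
  · -- isometry
    intro χ hχ f g
    obtain ⟨c, hc⟩ := exists_repr n f
    obtain ⟨d, hd⟩ := exists_repr n g
    rw [apply_formula n a f, apply_formula n a g]
    have hcf : (f : ℝ[X]).coeff n = (∑ i, c i) * ((n.factorial : ℝ))⁻¹ := coeff_of_repr n f c hc
    have hcg : (g : ℝ[X]).coeff n = (∑ j, d j) * ((n.factorial : ℝ))⁻¹ := coeff_of_repr n g d hd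
    set lf := a * (n.factorial : ℝ) * ((f : ℝ[X]).coeff n) with hlf
    set lg := a * (n.factorial : ℝ) * ((g : ℝ[X]).coeff n) with hlg
    have hlf' : lf = a * ∑ i, c i := by
      rw [hlf, hcf]; field_simp
    have hlg' : lg = a * ∑ j, d j := by
      rw [hlg, hcg]; field_simp
    simp only [map_add, map_smul, LinearMap.add_apply, LinearMap.smul_apply, smul_eq_mul]
    rw [chi_f_one n χ hχ f c hc, chi_one_g n χ hχ g d hd,
      chi_one_one n (by omega) χ hχ, hodd.neg_one_pow]
    rw [hlf', hlg']
    ring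
end

section
/- For n = 1 and for n = 2, the group of unipotent ℤ-linear isometries of (M_n, χ_n) is infinite cyclic, generated by the shift operator S : f(t) ↦ f(t+1): every ℤ-module automorphism φ of M_n with χ_n(φf, φg) = χ_n(f, g) for all f, g and (φ − id)^{n+1} = 0 equals S^m for a unique integer m. (The shift S corresponds to the twist E ↦ E ⊗ O(1) on K_0(P_n).) -/
open Polynomial

/-- `M n ⊂ V n`: the lattice of integer-valued polynomials of degree at most `n`,
as a `ℤ`-submodule of `ℝ[X]` (identified with the Grothendieck group `K₀(ℙ_n)`). -/
noncomputable def Msub (n : ℕ) : Submodule ℤ ℝ[X] where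
  carrier := {p | p.degree < ((n + 1 : ℕ) : WithBot ℕ) ∧
    ∀ m : ℤ, ∃ z : ℤ, p.eval (m : ℝ) = (z : ℝ)}
  zero_mem' :=
    ⟨lt_of_eq_of_lt Polynomial.degree_zero (WithBot.bot_lt_coe _), fun _ => ⟨0, by simp⟩⟩
  add_mem' := by
    rintro p q ⟨hp1, hp2⟩ ⟨hq1, hq2⟩
    refine ⟨lt_of_le_of_lt (Polynomial.degree_add_le p q) (max_lt hp1 hq1), fun m => ?_⟩
    obtain ⟨z1, hz1⟩ := hp2 m
    obtain ⟨z2, hz2⟩ := hq2 m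
    exact ⟨z1 + z2, by simp [hz1, hz2]⟩
  smul_mem' := by
    rintro c p ⟨hp1, hp2⟩
    rw [Set.mem_setOf_eq, zsmul_eq_mul]
    constructor
    · refine lt_of_le_of_lt (le_trans (Polynomial.degree_mul_le _ _) ?_) hp1
      have h0 : ((c : ℝ[X])).degree ≤ 0 := Polynomial.degree_intCast_le c
      calc (c : ℝ[X]).degree + p.degree ≤ 0 + p.degree := by gcongr
        _ = p.degree := by simp
    · intro m
      obtain ⟨z, hz⟩ := hp2 m
      exact ⟨c * z, by simp [hz]⟩

lemma mem_Msub {n : ℕ} {p : ℝ[X]} :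
    p ∈ Msub n ↔ p.degree < ((n + 1 : ℕ) : WithBot ℕ) ∧
      ∀ m : ℤ, ∃ z : ℤ, p.eval (m : ℝ) = (z : ℝ) :=
  Iff.rfl

/-- The inclusion `M n → V n`. -/
noncomputable def ιMV (n : ℕ) (f : Msub n) : V n :=
  ⟨(f : ℝ[X]), Polynomial.mem_degreeLT.mpr (mem_Msub.mp f.2).1⟩

/-- `φ` is a `ℤ`-linear isometry of the lattice `(M_n, χ_n)`. -/
def IsomM (n : ℕ) (χ : ↥(V n) →ₗ[ℝ] ↥(V n) →ₗ[ℝ] ℝ) (φ : Msub n ≃ₗ[ℤ] Msub n) : Prop :=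
  ∀ f g : Msub n, χ (ιMV n (φ f)) (ιMV n (φ g)) = χ (ιMV n f) (ιMV n g)

/-- `φ` is unipotent: `(φ - id)^(n+1) = 0`. -/
def UnipM (n : ℕ) (φ : Msub n ≃ₗ[ℤ] Msub n) : Prop :=
  ((φ.toLinearMap - LinearMap.id : Module.End ℤ (Msub n)) ^ (n + 1)) = 0

-- basis elements of Msub 1 (also used for n = 2 with different membership proofs)
noncomputable def mmP0 (n : ℕ) : Msub n := ⟨1, by
  rw [mem_Msub]
  constructor
  · rw [Polynomial.degree_one]
    exact_mod_cast Nat.succ_pos n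
  · exact fun m => ⟨1, by simp⟩⟩

noncomputable def mmP1 (n : ℕ) (hn : 1 ≤ n) : Msub n := ⟨X, by
  rw [mem_Msub]
  constructor
  · rw [Polynomial.degree_X]
    exact_mod_cast Nat.lt_succ_of_le hn
  · exact fun m => ⟨m, by simp⟩⟩

lemma eq_C_of_degree_lt2 (p : ℝ[X]) (h : p.degree < 2) :
    p = C (p.coeff 0) + C (p.coeff 1) * X := by
  ext n
  rcases n with _ | _ | n
  · simp
  · simp
  · simp only [coeff_add, coeff_C, coeff_C_mul, coeff_X]
    rw [Polynomial.coeff_eq_zero_of_degree_lt (lt_of_lt_of_le h (by exact_mod_cast by omega))]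
    simp

lemma coe_comb1 (a b : ℤ) :
    ((a • mmP0 1 + b • mmP1 1 le_rfl : Msub 1) : ℝ[X]) = C (a : ℝ) + C (b : ℝ) * X := by
  apply Polynomial.funext; intro x
  simp only [Submodule.coe_add, SetLike.val_smul, mmP0, mmP1, zsmul_eq_mul, eval_add, eval_mul,
    eval_intCast, eval_one, eval_X, eval_C]
  ring

lemma span1 (f : Msub 1) :
    ∃ a b : ℤ, f = a • mmP0 1 + b • mmP1 1 le_rfl := by
  obtain ⟨hdeg, hval⟩ := mem_Msub.mp f.2
  obtain ⟨z0, hz0⟩ := hval 0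
  obtain ⟨z1, hz1⟩ := hval 1
  refine ⟨z0, z1 - z0, ?_⟩
  apply Subtype.ext
  rw [coe_comb1]
  have hrep := eq_C_of_degree_lt2 (f : ℝ[X]) (by exact_mod_cast hdeg)
  rw [hrep] at hz0 hz1 ⊢
  simp only [eval_add, eval_mul, eval_C, eval_X, Int.cast_zero, Int.cast_one] at hz0 hz1
  rw [mul_zero, add_zero] at hz0
  rw [mul_one] at hz1
  have hp1 : (f : ℝ[X]).coeff 1 = ((z1 - z0 : ℤ) : ℝ) := by push_cast; linarith
  rw [hz0, hp1]

lemma indep1 (a b : ℤ) (h : a • mmP0 1 + b • mmP1 1 le_rfl = 0) : a = 0 ∧ b = 0 := by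
  have h' : ((a • mmP0 1 + b • mmP1 1 le_rfl : Msub 1) : ℝ[X]) = 0 := by rw [h]; rfl
  rw [coe_comb1] at h'
  have h0 := congrArg (Polynomial.eval 0) h'
  have h1 := congrArg (Polynomial.eval 1) h'
  simp at h0 h1
  constructor
  · exact_mod_cast h0
  · have : (b : ℝ) = 0 := by rw [h0] at h1; simpa using h1
    exact_mod_cast this

lemma gam1_comp (r : ℝ) : (gam 1).comp (X + C r) = X + C (r + 1) := by
  apply Polynomial.funext; intro x
  simp [gam, Polynomial.eval_comp, Polynomial.eval_prod, Finset.prod_range_succ, Nat.factorial]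
  ring

noncomputable def Ee1 (r : ℝ) : V 1 :=
  ⟨(gam 1).comp (X + C r), by
    rw [V, Polynomial.mem_degreeLT, gam1_comp, Polynomial.degree_X_add_C]; norm_num⟩

lemma chiE1 (χ : ↥(V 1) →ₗ[ℝ] ↥(V 1) →ₗ[ℝ] ℝ) (hχ : EulerCond 1 χ) (i j : Fin 2) :
    χ (Ee1 (i : ℕ)) (Ee1 (j : ℕ)) = ((1 + (j : ℕ) - (i : ℕ)).choose 1 : ℝ) :=
  hχ i j _ _ rfl rfl

lemma chi_formula1 (χ : ↥(V 1) →ₗ[ℝ] ↥(V 1) →ₗ[ℝ] ℝ) (hχ : EulerCond 1 χ)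
    (a b d e : ℝ) (u v : V 1)
    (hu : ∀ x : ℝ, (u : ℝ[X]).eval x = a + b * x)
    (hv : ∀ x : ℝ, (v : ℝ[X]).eval x = d + e * x) :
    χ u v = -a * e + b * d + b * e := by
  have c00 : χ (Ee1 0) (Ee1 0) = 1 := by have := chiE1 χ hχ 0 0; norm_num at this; exact this
  have c01 : χ (Ee1 0) (Ee1 1) = 2 := by have := chiE1 χ hχ 0 1; norm_num at this; exact this
  have c10 : χ (Ee1 1) (Ee1 0) = 0 := by have := chiE1 χ hχ 1 0; norm_num at this; exact this
  have c11 : χ (Ee1 1) (Ee1 1) = 1 := by have := chiE1 χ hχ 1 1; norm_num at this; exact this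
  have hE : ∀ r : ℝ, ((Ee1 r : V 1) : ℝ[X]) = X + C (r+1) := fun r => gam1_comp r
  have hu' : u = (2*b - a) • Ee1 0 + (a - b) • Ee1 1 := by
    apply Subtype.ext; apply Polynomial.funext; intro x
    simp only [Submodule.coe_add, SetLike.val_smul, hE, smul_eq_C_mul, eval_add, eval_mul,
      eval_C, eval_X, hu x]
    ring
  have hv' : v = (2*e - d) • Ee1 0 + (d - e) • Ee1 1 := by
    apply Subtype.ext; apply Polynomial.funext; intro x
    simp only [Submodule.coe_add, SetLike.val_smul, hE, smul_eq_C_mul, eval_add, eval_mul,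
      eval_C, eval_X, hv x]
    ring
  rw [hu', hv']
  simp only [map_add, map_smul, LinearMap.add_apply, LinearMap.smul_apply, smul_eq_mul,
    c00, c01, c10, c11]
  ring

lemma eval_comb1 (a b : ℤ) (g : Msub 1) (hg : g = a • mmP0 1 + b • mmP1 1 le_rfl) :
    ∀ x : ℝ, ((ιMV 1 g : V 1) : ℝ[X]).eval x = (a : ℝ) + (b : ℝ) * x := by
  intro x
  have : ((ιMV 1 g : V 1) : ℝ[X]) = (g : ℝ[X]) := rfl
  rw [this, hg, coe_comb1]
  simp

variable {S : Msub 1 ≃ₗ[ℤ] Msub 1}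

lemma S1_m0 (hS : ∀ f : Msub 1, ((S f : ℝ[X])) = (f : ℝ[X]).comp (Polynomial.X + 1)) : S (mmP0 1) = mmP0 1 := by
  apply Subtype.ext
  rw [hS]
  show ((1:ℝ[X])).comp (X + 1) = ((1:ℝ[X]))
  simp

lemma S1_m1 (hS : ∀ f : Msub 1, ((S f : ℝ[X])) = (f : ℝ[X]).comp (Polynomial.X + 1)) : S (mmP1 1 le_rfl) = mmP0 1 + mmP1 1 le_rfl := by
  apply Subtype.ext
  rw [hS]
  show (X : ℝ[X]).comp (X + 1) = (1 : ℝ[X]) + X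
  simp [add_comm]

lemma S1inv_m0 (hS : ∀ f : Msub 1, ((S f : ℝ[X])) = (f : ℝ[X]).comp (Polynomial.X + 1)) : S⁻¹ (mmP0 1) = mmP0 1 := by
  have : S (S⁻¹ (mmP0 1)) = S (mmP0 1) := by
    rw [S1_m0 hS]
    exact S.apply_symm_apply _
  exact S.injective this

lemma S1inv_m1 (hS : ∀ f : Msub 1, ((S f : ℝ[X])) = (f : ℝ[X]).comp (Polynomial.X + 1)) : S⁻¹ (mmP1 1 le_rfl) = mmP1 1 le_rfl - mmP0 1 := by
  have : S (S⁻¹ (mmP1 1 le_rfl)) = S (mmP1 1 le_rfl - mmP0 1) := by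
    rw [map_sub, S1_m0 hS, S1_m1 hS,
      show S (S⁻¹ (mmP1 1 le_rfl)) = mmP1 1 le_rfl from S.apply_symm_apply _]
    abel
  exact S.injective this

lemma S1_zpow (hS : ∀ f : Msub 1, ((S f : ℝ[X])) = (f : ℝ[X]).comp (Polynomial.X + 1)) (k : ℤ) : (S ^ k) (mmP0 1) = mmP0 1 ∧
    (S ^ k) (mmP1 1 le_rfl) = k • mmP0 1 + mmP1 1 le_rfl := by
  induction k using Int.induction_on with
  | zero => simp
  | succ k ih =>
    have hmul : S ^ ((k : ℤ) + 1) = S ^ (k : ℤ) * S := by rw [zpow_add_one]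
    have hap : ∀ x, (S ^ ((k : ℤ) + 1)) x = (S ^ (k : ℤ)) (S x) := by
      intro x; rw [hmul]; rfl
    constructor
    · rw [hap, S1_m0 hS, ih.1]
    · rw [hap, S1_m1 hS, map_add, ih.1, ih.2]
      module
  | pred k ih =>
    have hmul : S ^ (-(k : ℤ) - 1) = S ^ (-(k : ℤ)) * S⁻¹ := by rw [zpow_sub_one]
    have hap : ∀ x, (S ^ (-(k : ℤ) - 1)) x = (S ^ (-(k : ℤ))) (S⁻¹ x) := by
      intro x; rw [hmul]; rfl
    constructor
    · rw [hap, S1inv_m0 hS, ih.1]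
    · rw [hap, S1inv_m1 hS, map_sub, ih.1, ih.2]
      module


theorem case1 (χ : ↥(V 1) →ₗ[ℝ] ↥(V 1) →ₗ[ℝ] ℝ) (hχ : EulerCond 1 χ)
    (S : Msub 1 ≃ₗ[ℤ] Msub 1)
    (hS : ∀ f : Msub 1, ((S f : ℝ[X])) = (f : ℝ[X]).comp (Polynomial.X + 1))
    (φ : Msub 1 ≃ₗ[ℤ] Msub 1) (hiso : IsomM 1 χ φ) (huni : UnipM 1 φ) :
    ∃! m : ℤ, φ = S ^ m := by
  obtain ⟨p, r, hφ0⟩ := span1 (φ (mmP0 1))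
  obtain ⟨q, s, hφ1⟩ := span1 (φ (mmP1 1 le_rfl))
  have hm0dec : (mmP0 1) = (1:ℤ) • (mmP0 1) + (0:ℤ) • (mmP1 1 le_rfl) := by module
  have hm1dec : (mmP1 1 le_rfl) = (0:ℤ) • (mmP0 1) + (1:ℤ) • (mmP1 1 le_rfl) := by module
  -- the χ values
  have chiMM : ∀ (g h : Msub 1) (a b d e : ℤ),
      g = a • (mmP0 1) + b • (mmP1 1 le_rfl) → h = d • (mmP0 1) + e • (mmP1 1 le_rfl) →
      χ (ιMV 1 g) (ιMV 1 h) =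
        -(a:ℝ) * (e:ℝ) + (b:ℝ) * (d:ℝ) + (b:ℝ) * (e:ℝ) := by
    intro g h a b d e hg hh
    exact chi_formula1 χ hχ _ _ _ _ _ _ (eval_comb1 a b g hg) (eval_comb1 d e h hh)
  -- isometry equations
  have E00 := hiso (mmP0 1) (mmP0 1)
  rw [chiMM _ _ p r p r hφ0 hφ0, chiMM (mmP0 1) (mmP0 1) 1 0 1 0 hm0dec hm0dec] at E00
  have E01 := hiso (mmP0 1) (mmP1 1 le_rfl)
  rw [chiMM _ _ p r q s hφ0 hφ1, chiMM (mmP0 1) (mmP1 1 le_rfl) 1 0 0 1 hm0dec hm1dec] at E01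
  -- E00 : r^2 = 0, so r = 0
  have hr : r = 0 := by
    have : (r:ℝ) * (r:ℝ) = 0 := by push_cast at E00 ⊢; linarith
    have : r * r = 0 := by exact_mod_cast this
    exact mul_self_eq_zero.mp this
  subst hr
  rw [zero_smul, add_zero] at hφ0
  -- E01 : p * s = 1
  have hps : p * s = 1 := by
    have : (p:ℝ) * (s:ℝ) = 1 := by push_cast at E01 ⊢; linarith
    exact_mod_cast this
  -- unipotency gives p = 1
  have hp : p = 1 := by
    have h2 := DFunLike.congr_fun huni (mmP0 1)
    simp only [LinearMap.zero_apply] at h2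
    have hP : ((φ.toLinearMap - LinearMap.id : Module.End ℤ (Msub 1))) (mmP0 1) = (p-1) • (mmP0 1) := by
      rw [LinearMap.sub_apply, LinearMap.id_apply, LinearEquiv.coe_coe, hφ0]; module
    rw [pow_two, Module.End.mul_apply, hP, map_smul, hP] at h2
    have h3 : ((p-1)*(p-1)) • (mmP0 1) + (0:ℤ) • (mmP1 1 le_rfl) = 0 := by
      rw [zero_smul, add_zero, mul_smul]
      exact h2
    have h4 := (indep1 _ _ h3).1
    have : p - 1 = 0 := by
      exact mul_self_eq_zero.mp h4
    omega
  subst hp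
  have hs : s = 1 := by omega
  subst hs
  rw [one_smul] at hφ0 hφ1
  -- φ = S ^ q
  refine ⟨q, ?_, ?_⟩
  · apply LinearEquiv.ext
    intro f
    obtain ⟨a, b, hf⟩ := span1 f
    rw [hf, map_add, map_smul, map_smul, map_add, map_smul, map_smul,
      hφ0, hφ1, (S1_zpow hS q).1, (S1_zpow hS q).2]
  · intro y hy
    have h1 : (S ^ y) (mmP1 1 le_rfl) = (S ^ q) (mmP1 1 le_rfl) := by rw [← hy, hφ1, (S1_zpow hS q).2]
    rw [(S1_zpow hS y).2, (S1_zpow hS q).2] at h1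
    have h2 : (y - q) • (mmP0 1) + (0:ℤ) • (mmP1 1 le_rfl) = 0 := by
      rw [zero_smul, add_zero, sub_smul]
      rw [show y • (mmP0 1) - q • (mmP0 1) = (y • (mmP0 1) + (mmP1 1 le_rfl)) - (q • (mmP0 1) + (mmP1 1 le_rfl)) by abel]
      rw [h1]
      abel
    have := (indep1 _ _ h2).1
    omega

-- ===================== n = 2 =====================

lemma gam2_comp (r : ℝ) :
    (gam 2).comp (X + C r) = C (2⁻¹ : ℝ) * ((X + C (r+1)) * (X + C (r+2))) := by
  apply Polynomial.funext; intro x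
  simp [gam, Polynomial.eval_comp, Polynomial.eval_prod, Finset.prod_range_succ, Nat.factorial]
  ring

noncomputable def Ee2 (r : ℝ) : V 2 :=
  ⟨(gam 2).comp (X + C r), by
    rw [V, Polynomial.mem_degreeLT, gam2_comp]
    refine lt_of_le_of_lt (le_trans (Polynomial.degree_mul_le _ _) ?_)
      (by norm_num : (2 : WithBot ℕ) < 3)
    have h1 : ((X + C (r+1) : ℝ[X]) * (X + C (r+2))).degree ≤ 2 := by
      refine le_trans (Polynomial.degree_mul_le _ _) ?_
      rw [Polynomial.degree_X_add_C, Polynomial.degree_X_add_C]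
      norm_num
    calc (C (2⁻¹:ℝ)).degree + ((X + C (r+1) : ℝ[X]) * (X + C (r+2))).degree
        ≤ 0 + 2 := add_le_add Polynomial.degree_C_le h1
      _ = 2 := by norm_num⟩

lemma chiE2 (χ : ↥(V 2) →ₗ[ℝ] ↥(V 2) →ₗ[ℝ] ℝ) (hχ : EulerCond 2 χ) (i j : Fin 3) :
    χ (Ee2 (i : ℕ)) (Ee2 (j : ℕ)) = ((2 + (j : ℕ) - (i : ℕ)).choose 2 : ℝ) :=
  hχ i j _ _ rfl rfl

lemma chi_formula2 (χ : ↥(V 2) →ₗ[ℝ] ↥(V 2) →ₗ[ℝ] ℝ) (hχ : EulerCond 2 χ)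
    (a b c d e f : ℝ) (u v : V 2)
    (hu : ∀ x : ℝ, (u : ℝ[X]).eval x = a + b * x + c * (x^2 - x) / 2)
    (hv : ∀ x : ℝ, (v : ℝ[X]).eval x = d + e * x + f * (x^2 - x) / 2) :
    χ u v = a*f - b*e - b*f + c*d + 2*c*e + c*f := by
  have c00 : χ (Ee2 0) (Ee2 0) = 1 := by have := chiE2 χ hχ 0 0; norm_num at this; exact this
  have c01 : χ (Ee2 0) (Ee2 1) = 3 := by have := chiE2 χ hχ 0 1; norm_num at this; exact this
  have c02 : χ (Ee2 0) (Ee2 2) = 6 := by have := chiE2 χ hχ 0 2; norm_num at this; exact this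
  have c10 : χ (Ee2 1) (Ee2 0) = 0 := by have := chiE2 χ hχ 1 0; norm_num at this; exact this
  have c11 : χ (Ee2 1) (Ee2 1) = 1 := by have := chiE2 χ hχ 1 1; norm_num at this; exact this
  have c12 : χ (Ee2 1) (Ee2 2) = 3 := by have := chiE2 χ hχ 1 2; norm_num at this; exact this
  have c20 : χ (Ee2 2) (Ee2 0) = 0 := by have := chiE2 χ hχ 2 0; norm_num at this; exact this
  have c21 : χ (Ee2 2) (Ee2 1) = 0 := by have := chiE2 χ hχ 2 1; norm_num at this; exact this
  have c22 : χ (Ee2 2) (Ee2 2) = 1 := by have := chiE2 χ hχ 2 2; norm_num at this; exact this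
  have hE : ∀ r : ℝ, ((Ee2 r : V 2) : ℝ[X]) = C (2⁻¹ : ℝ) * ((X + C (r+1)) * (X + C (r+2))) :=
    fun r => gam2_comp r
  have hu' : u = (a - 3*b + 6*c) • Ee2 0 + (-2*a + 5*b - 8*c) • Ee2 1 + (a - 2*b + 3*c) • Ee2 2 := by
    apply Subtype.ext; apply Polynomial.funext; intro x
    simp only [Submodule.coe_add, SetLike.val_smul, hE, smul_eq_C_mul, eval_add, eval_mul,
      eval_C, eval_X, hu x]
    ring
  have hv' : v = (d - 3*e + 6*f) • Ee2 0 + (-2*d + 5*e - 8*f) • Ee2 1 + (d - 2*e + 3*f) • Ee2 2 := by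
    apply Subtype.ext; apply Polynomial.funext; intro x
    simp only [Submodule.coe_add, SetLike.val_smul, hE, smul_eq_C_mul, eval_add, eval_mul,
      eval_C, eval_X, hv x]
    ring
  rw [hu', hv']
  simp only [map_add, map_smul, LinearMap.add_apply, LinearMap.smul_apply, smul_eq_mul,
    c00, c01, c02, c10, c11, c12, c20, c21, c22]
  ring

noncomputable def mmP2 : Msub 2 := ⟨C (2⁻¹ : ℝ) * (X^2 - X), by
  rw [mem_Msub]
  constructor
  · refine lt_of_le_of_lt (le_trans (Polynomial.degree_mul_le _ _) ?_)
      (by norm_num : (2 : WithBot ℕ) < ((3:ℕ) : WithBot ℕ))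
    have h1 : (X^2 - X : ℝ[X]).degree ≤ 2 := by
      refine le_trans (Polynomial.degree_sub_le _ _) ?_
      rw [Polynomial.degree_X_pow, Polynomial.degree_X]
      norm_num
    calc (C (2⁻¹:ℝ)).degree + (X^2 - X : ℝ[X]).degree ≤ 0 + 2 :=
        add_le_add Polynomial.degree_C_le h1
      _ = 2 := by norm_num
  · intro m
    obtain ⟨k, hk⟩ := Int.even_mul_succ_self (m - 1)
    refine ⟨k, ?_⟩
    have hk' : ((m:ℝ) - 1) * ((m:ℝ) - 1 + 1) = (k:ℝ) + (k:ℝ) := by exact_mod_cast congrArg (Int.cast : ℤ → ℝ) hk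
    simp only [eval_mul, eval_sub, eval_pow, eval_C, eval_X]
    linear_combination (2⁻¹:ℝ) * hk'⟩

lemma mcomb2_eval (a b c : ℤ) (x : ℝ) :
    (((a • mmP0 2 + b • mmP1 2 one_le_two + c • mmP2) : Msub 2) : ℝ[X]).eval x =
      (a:ℝ) + (b:ℝ) * x + (c:ℝ) * (x^2 - x) / 2 := by
  simp only [Submodule.coe_add, SetLike.val_smul, mmP0, mmP1, mmP2, zsmul_eq_mul,
    eval_add, eval_mul, eval_intCast, eval_one, eval_X, eval_sub, eval_pow, eval_C]
  ring

lemma eq_C_of_degree_lt3 (p : ℝ[X]) (h : p.degree < 3) :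
    p = C (p.coeff 0) + C (p.coeff 1) * X + C (p.coeff 2) * X^2 := by
  ext n
  rcases n with _ | _ | _ | n
  · simp
  · simp
  · simp [coeff_X_pow]
  · simp only [coeff_add, coeff_C, coeff_C_mul, coeff_X, coeff_X_pow]
    rw [Polynomial.coeff_eq_zero_of_degree_lt (lt_of_lt_of_le h (by exact_mod_cast by omega))]
    simp

lemma span2 (f : Msub 2) :
    ∃ a b c : ℤ, f = a • mmP0 2 + b • mmP1 2 one_le_two + c • mmP2 := by
  obtain ⟨hdeg, hval⟩ := mem_Msub.mp f.2
  obtain ⟨z0, hz0⟩ := hval 0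
  obtain ⟨z1, hz1⟩ := hval 1
  obtain ⟨z2, hz2⟩ := hval 2
  refine ⟨z0, z1 - z0, z2 - 2*z1 + z0, ?_⟩
  apply Subtype.ext
  apply Polynomial.funext
  intro x
  rw [mcomb2_eval]
  have hrep := eq_C_of_degree_lt3 (f : ℝ[X]) (by exact_mod_cast hdeg)
  rw [hrep] at hz0 hz1 hz2 ⊢
  simp only [eval_add, eval_mul, eval_C, eval_X, eval_pow, Int.cast_zero, Int.cast_one,
    Int.cast_two, Int.cast_ofNat] at hz0 hz1 hz2 ⊢
  push_cast
  linear_combination (1 - 2*x + x^2 - (x^2-x)/2) * hz0 + (2*x - x^2) * hz1 + ((x^2-x)/2) * hz2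

lemma indep2 (a b c : ℤ) (h : a • mmP0 2 + b • mmP1 2 one_le_two + c • mmP2 = 0) :
    a = 0 ∧ b = 0 ∧ c = 0 := by
  have h' : ∀ x : ℝ, (a:ℝ) + (b:ℝ) * x + (c:ℝ) * (x^2 - x) / 2 = 0 := by
    intro x
    rw [← mcomb2_eval a b c x, h]
    simp
  have ha : (a:ℝ) = 0 := by linarith [h' 0, h' 1, h' 2]
  have hb : (b:ℝ) = 0 := by linarith [h' 0, h' 1, h' 2]
  have hc : (c:ℝ) = 0 := by linarith [h' 0, h' 1, h' 2]
  refine ⟨by exact_mod_cast ha, by exact_mod_cast hb, by exact_mod_cast hc⟩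

lemma eval_comb2 (a b c : ℤ) (g : Msub 2)
    (hg : g = a • mmP0 2 + b • mmP1 2 one_le_two + c • mmP2) :
    ∀ x : ℝ, ((ιMV 2 g : V 2) : ℝ[X]).eval x = (a:ℝ) + (b:ℝ) * x + (c:ℝ) * (x^2 - x) / 2 := by
  intro x
  have : ((ιMV 2 g : V 2) : ℝ[X]) = (g : ℝ[X]) := rfl
  rw [this, hg, mcomb2_eval]

-- shift lemmas, n = 2
variable {T : Msub 2 ≃ₗ[ℤ] Msub 2}

lemma S2_m0 (hT : ∀ f : Msub 2, ((T f : ℝ[X])) = (f : ℝ[X]).comp (Polynomial.X + 1)) :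
    T (mmP0 2) = mmP0 2 := by
  apply Subtype.ext
  rw [hT]
  show ((1:ℝ[X])).comp (X + 1) = ((1:ℝ[X]))
  simp

lemma S2_m1 (hT : ∀ f : Msub 2, ((T f : ℝ[X])) = (f : ℝ[X]).comp (Polynomial.X + 1)) :
    T (mmP1 2 one_le_two) = mmP0 2 + mmP1 2 one_le_two := by
  apply Subtype.ext
  rw [hT]
  show (X : ℝ[X]).comp (X + 1) = (1 : ℝ[X]) + X
  simp [add_comm]

lemma S2_m2 (hT : ∀ f : Msub 2, ((T f : ℝ[X])) = (f : ℝ[X]).comp (Polynomial.X + 1)) :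
    T mmP2 = mmP1 2 one_le_two + mmP2 := by
  apply Subtype.ext
  rw [hT]
  show (C (2⁻¹ : ℝ) * (X^2 - X)).comp (X + 1) = (X : ℝ[X]) + C (2⁻¹ : ℝ) * (X^2 - X)
  apply Polynomial.funext; intro x
  simp [Polynomial.eval_comp]
  ring

lemma S2inv_m0 (hT : ∀ f : Msub 2, ((T f : ℝ[X])) = (f : ℝ[X]).comp (Polynomial.X + 1)) :
    T⁻¹ (mmP0 2) = mmP0 2 := by
  have : T (T⁻¹ (mmP0 2)) = T (mmP0 2) := by
    rw [S2_m0 hT]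
    exact T.apply_symm_apply _
  exact T.injective this

lemma S2inv_m1 (hT : ∀ f : Msub 2, ((T f : ℝ[X])) = (f : ℝ[X]).comp (Polynomial.X + 1)) :
    T⁻¹ (mmP1 2 one_le_two) = mmP1 2 one_le_two - mmP0 2 := by
  have : T (T⁻¹ (mmP1 2 one_le_two)) = T (mmP1 2 one_le_two - mmP0 2) := by
    rw [map_sub, S2_m0 hT, S2_m1 hT,
      show T (T⁻¹ (mmP1 2 one_le_two)) = mmP1 2 one_le_two from T.apply_symm_apply _]
    abel
  exact T.injective this

lemma S2inv_m2 (hT : ∀ f : Msub 2, ((T f : ℝ[X])) = (f : ℝ[X]).comp (Polynomial.X + 1)) :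
    T⁻¹ mmP2 = mmP2 - mmP1 2 one_le_two + mmP0 2 := by
  have : T (T⁻¹ mmP2) = T (mmP2 - mmP1 2 one_le_two + mmP0 2) := by
    rw [map_add, map_sub, S2_m0 hT, S2_m1 hT, S2_m2 hT,
      show T (T⁻¹ mmP2) = mmP2 from T.apply_symm_apply _]
    abel
  exact T.injective this

lemma S2_zpow01 (hT : ∀ f : Msub 2, ((T f : ℝ[X])) = (f : ℝ[X]).comp (Polynomial.X + 1)) (k : ℤ) :
    (T ^ k) (mmP0 2) = mmP0 2 ∧
    (T ^ k) (mmP1 2 one_le_two) = k • mmP0 2 + mmP1 2 one_le_two := by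
  induction k using Int.induction_on with
  | zero => simp
  | succ k ih =>
    have hap : ∀ x, (T ^ ((k : ℤ) + 1)) x = (T ^ (k : ℤ)) (T x) := by
      intro x; rw [zpow_add_one]; rfl
    constructor
    · rw [hap, S2_m0 hT, ih.1]
    · rw [hap, S2_m1 hT, map_add, ih.1, ih.2]
      module
  | pred k ih =>
    have hap : ∀ x, (T ^ (-(k : ℤ) - 1)) x = (T ^ (-(k : ℤ))) (T⁻¹ x) := by
      intro x; rw [zpow_sub_one]; rfl
    constructor
    · rw [hap, S2inv_m0 hT, ih.1]
    · rw [hap, S2inv_m1 hT, map_sub, ih.1, ih.2]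
      module

lemma S2_zpow2 (hT : ∀ f : Msub 2, ((T f : ℝ[X])) = (f : ℝ[X]).comp (Polynomial.X + 1)) (k : ℤ) :
    ∀ j : ℤ, 2 * j = k * (k - 1) →
    (T ^ k) mmP2 = j • mmP0 2 + k • mmP1 2 one_le_two + mmP2 := by
  induction k using Int.induction_on with
  | zero =>
    intro j hj
    have hj0 : j = 0 := by omega
    subst hj0
    simp
  | succ k ih =>
    intro j hj
    have hap : (T ^ ((k : ℤ) + 1)) mmP2 = (T ^ (k : ℤ)) (T mmP2) := by
      rw [zpow_add_one]; rfl
    rw [hap, S2_m2 hT, map_add, (S2_zpow01 hT (k:ℤ)).2, ih (j - k) (by push_cast at hj ⊢; ring_nf; ring_nf at hj; omega)]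
    module
  | pred k ih =>
    intro j hj
    have hap : (T ^ (-(k : ℤ) - 1)) mmP2 = (T ^ (-(k : ℤ))) (T⁻¹ mmP2) := by
      rw [zpow_sub_one]; rfl
    rw [hap, S2inv_m2 hT, map_add, map_sub, (S2_zpow01 hT (-(k:ℤ))).1,
      (S2_zpow01 hT (-(k:ℤ))).2, ih (j - k - 1) (by push_cast at hj ⊢; ring_nf; ring_nf at hj; omega)]
    module

theorem case2 (χ : ↥(V 2) →ₗ[ℝ] ↥(V 2) →ₗ[ℝ] ℝ) (hχ : EulerCond 2 χ)
    (S : Msub 2 ≃ₗ[ℤ] Msub 2)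
    (hS : ∀ f : Msub 2, ((S f : ℝ[X])) = (f : ℝ[X]).comp (Polynomial.X + 1))
    (φ : Msub 2 ≃ₗ[ℤ] Msub 2) (hiso : IsomM 2 χ φ) (huni : UnipM 2 φ) :
    ∃! m : ℤ, φ = S ^ m := by
  obtain ⟨a0, b0, c0, hφ0⟩ := span2 (φ (mmP0 2))
  obtain ⟨a1, b1, c1, hφ1⟩ := span2 (φ (mmP1 2 one_le_two))
  obtain ⟨a2, b2, c2, hφ2⟩ := span2 (φ mmP2)
  have hm0dec : mmP0 2 = (1:ℤ) • mmP0 2 + (0:ℤ) • mmP1 2 one_le_two + (0:ℤ) • mmP2 := by module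
  have hm1dec : mmP1 2 one_le_two =
      (0:ℤ) • mmP0 2 + (1:ℤ) • mmP1 2 one_le_two + (0:ℤ) • mmP2 := by module
  have hm2dec : mmP2 = (0:ℤ) • mmP0 2 + (0:ℤ) • mmP1 2 one_le_two + (1:ℤ) • mmP2 := by module
  have chiMM : ∀ (g h : Msub 2) (a b c d e f : ℤ),
      g = a • mmP0 2 + b • mmP1 2 one_le_two + c • mmP2 →
      h = d • mmP0 2 + e • mmP1 2 one_le_two + f • mmP2 →
      χ (ιMV 2 g) (ιMV 2 h) =
        (a:ℝ)*(f:ℝ) - (b:ℝ)*(e:ℝ) - (b:ℝ)*(f:ℝ) + (c:ℝ)*(d:ℝ) + 2*(c:ℝ)*(e:ℝ) + (c:ℝ)*(f:ℝ) := by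
    intro g h a b c d e f hg hh
    exact chi_formula2 χ hχ _ _ _ _ _ _ _ _ (eval_comb2 a b c g hg) (eval_comb2 d e f h hh)
  -- real isometry equations converted to integer equations
  have mkEq : ∀ (g h : Msub 2) (a b c d e f a' b' c' d' e' f' : ℤ),
      g = a • mmP0 2 + b • mmP1 2 one_le_two + c • mmP2 →
      h = d • mmP0 2 + e • mmP1 2 one_le_two + f • mmP2 →
      φ g = a' • mmP0 2 + b' • mmP1 2 one_le_two + c' • mmP2 →
      φ h = d' • mmP0 2 + e' • mmP1 2 one_le_two + f' • mmP2 →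
      a'*f' - b'*e' - b'*f' + c'*d' + 2*c'*e' + c'*f'
        = a*f - b*e - b*f + c*d + 2*c*e + c*f := by
    intro g h a b c d e f a' b' c' d' e' f' hg hh hg' hh'
    have := hiso g h
    rw [chiMM _ _ _ _ _ _ _ _ hg' hh', chiMM _ _ _ _ _ _ _ _ hg hh] at this
    exact_mod_cast this
  have e01 := mkEq _ _ 1 0 0 0 1 0 a0 b0 c0 a1 b1 c1 hm0dec hm1dec hφ0 hφ1
  have e10 := mkEq _ _ 0 1 0 1 0 0 a1 b1 c1 a0 b0 c0 hm1dec hm0dec hφ1 hφ0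
  have e02 := mkEq _ _ 1 0 0 0 0 1 a0 b0 c0 a2 b2 c2 hm0dec hm2dec hφ0 hφ2
  have e20 := mkEq _ _ 0 0 1 1 0 0 a2 b2 c2 a0 b0 c0 hm2dec hm0dec hφ2 hφ0
  have e12 := mkEq _ _ 0 1 0 0 0 1 a1 b1 c1 a2 b2 c2 hm1dec hm2dec hφ1 hφ2
  have e21 := mkEq _ _ 0 0 1 0 1 0 a2 b2 c2 a1 b1 c1 hm2dec hm1dec hφ2 hφ1
  have e22 := mkEq _ _ 0 0 1 0 0 1 a2 b2 c2 a2 b2 c2 hm2dec hm2dec hφ2 hφ2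
  norm_num at e01 e10 e02 e20 e12 e21 e22
  -- antisymmetric parts
  have h1 : b0*c1 - c0*b1 = 0 := by linarith [e01, e10]
  have h2 : b0*c2 - c0*b2 = 0 := by linarith [e02, e20]
  have h3 : b1*c2 - c1*b2 = 1 := by linarith [e12, e21]
  have hb0 : b0 = 0 := by linear_combination (-b0)*h3 + b1*h2 - b2*h1
  have hc0 : c0 = 0 := by linear_combination (-c0)*h3 + c1*h2 - c2*h1
  subst hb0; subst hc0
  simp only [zero_smul, add_zero] at hφ0
  -- a0 * c2 = 1
  have ha0c2 : a0 * c2 = 1 := by linear_combination e02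
  -- unipotency: a0 = 1
  have ha0 : a0 = 1 := by
    have hU := DFunLike.congr_fun huni (mmP0 2)
    simp only [LinearMap.zero_apply] at hU
    have hP : ((φ.toLinearMap - LinearMap.id : Module.End ℤ (Msub 2))) (mmP0 2)
        = (a0 - 1) • mmP0 2 := by
      rw [LinearMap.sub_apply, LinearMap.id_apply, LinearEquiv.coe_coe, hφ0]; module
    rw [pow_succ, pow_two, Module.End.mul_apply, Module.End.mul_apply, hP, map_smul, hP,
      map_smul, map_smul, hP] at hU
    have h3' : ((a0-1)*((a0-1)*(a0-1))) • mmP0 2 + (0:ℤ) • mmP1 2 one_le_two + (0:ℤ) • mmP2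
        = 0 := by
      rw [show ((a0-1)*((a0-1)*(a0-1))) • mmP0 2 + (0:ℤ) • mmP1 2 one_le_two + (0:ℤ) • mmP2
        = (a0-1) • (a0-1) • (a0-1) • mmP0 2 by module]
      exact hU
    have h4 := (indep2 _ _ _ h3').1
    have : a0 - 1 = 0 := by
      rcases mul_eq_zero.mp h4 with h | h
      · exact h
      · exact mul_self_eq_zero.mp h
    omega
  subst ha0
  have hc2 : c2 = 1 := by omega
  subst hc2
  -- c1 = 0
  have hc1 : c1 = 0 := by linear_combination e01
  subst hc1
  -- b1 = 1
  have hb1 : b1 = 1 := by linear_combination h3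
  subst hb1
  -- b2 = a1
  have hb2 : b2 = a1 := by linear_combination -e12
  rw [hb2] at hφ2
  -- 2 * a2 = a1 * (a1 - 1)
  have ha2 : 2 * a2 = a1 * (a1 - 1) := by linear_combination e22 + (b2 + a1 - 1) * hb2
  simp only [zero_smul, add_zero, one_smul] at hφ1 hφ2
  refine ⟨a1, ?_, ?_⟩
  · apply LinearEquiv.ext
    intro f
    obtain ⟨x, y, z, hf⟩ := span2 f
    rw [hf, map_add, map_add, map_smul, map_smul, map_smul,
      map_add, map_add, map_smul, map_smul, map_smul,
      hφ0, hφ1, hφ2, (S2_zpow01 hS a1).1, (S2_zpow01 hS a1).2, S2_zpow2 hS a1 a2 ha2]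
    module
  · intro y hy
    have h1' : (S ^ y) (mmP1 2 one_le_two) = (S ^ a1) (mmP1 2 one_le_two) := by
      rw [← hy, hφ1, (S2_zpow01 hS a1).2]
    rw [(S2_zpow01 hS y).2, (S2_zpow01 hS a1).2] at h1'
    have h2' : (y - a1) • mmP0 2 + (0:ℤ) • mmP1 2 one_le_two + (0:ℤ) • mmP2 = 0 := by
      rw [show (y - a1) • mmP0 2 + (0:ℤ) • mmP1 2 one_le_two + (0:ℤ) • mmP2
        = (y • mmP0 2 + mmP1 2 one_le_two) - (a1 • mmP0 2 + mmP1 2 one_le_two) by module, h1']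
      abel
    have := (indep2 _ _ _ h2').1
    omega

/-- For `n = 1` and `n = 2`, the group of unipotent `ℤ`-linear isometries of `(M_n, χ_n)`
is infinite cyclic, generated by the shift `S : f(t) ↦ f(t+1)`: every unipotent
isometry equals `S^m` for a unique integer `m`. (`S` corresponds to the twist
`E ↦ E ⊗ O(1)` on `K₀(ℙ_n)`.) -/
theorem unipotent_isometries_n_one_two (n : ℕ) (hn : n = 1 ∨ n = 2)
    (χ : ↥(V n) →ₗ[ℝ] ↥(V n) →ₗ[ℝ] ℝ) (hχ : EulerCond n χ)
    (S : Msub n ≃ₗ[ℤ] Msub n)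
    (hS : ∀ f : Msub n, ((S f : ℝ[X])) = (f : ℝ[X]).comp (Polynomial.X + 1)) :
    ∀ φ : Msub n ≃ₗ[ℤ] Msub n, IsomM n χ φ → UnipM n φ →
      ∃! m : ℤ, φ = S ^ m := by
  rcases hn with rfl | rfl
  · exact fun φ hiso huni => case1 χ hχ S hS φ hiso huni
  · exact fun φ hiso huni => case2 χ hχ S hS φ hiso huni
end
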